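/- arXiv:2405.16228 — 2 statements merged into one kernel-verified Lean document; each statement's English description precedes it below -/
import Mathlib

section
/- Let β > 0, integer n ≥ 1, and g analytic on D. The operator I_g^{n,0} f = I^n(f g) is bounded from the Bloch space B (α = 1) to B^β if and only if sup_{z∈D} (1-|z|²)^{n+β-1} log(2/(1-|z|²)) |g(z)| < ∞. -/
open Complex Metric Filter Topology

noncomputable section

def UDisk : Set ℂ := Metric.ball 0 1

def bSemi (α : ℝ) (f : ℂ → ℂ) : ℝ :=
  ⨆ z : UDisk, (1 - ‖(z : ℂ)‖ ^ 2) ^ α * ‖deriv f (z : ℂ)‖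

def bNorm (α : ℝ) (f : ℂ → ℂ) : ℝ := ‖f 0‖ + bSemi α f

def MemBloch (α : ℝ) (f : ℂ → ℂ) : Prop :=
  DifferentiableOn ℂ f UDisk ∧
    ∃ C : ℝ, ∀ z ∈ UDisk, (1 - ‖z‖ ^ 2) ^ α * ‖deriv f z‖ ≤ C

def intOp (f : ℂ → ℂ) : ℂ → ℂ := fun z => z * ∫ t in (0:ℝ)..1, f (t * z)

def Ig (g : ℂ → ℂ) (n k : ℕ) (f : ℂ → ℂ) : ℂ → ℂ :=
  intOp^[n] (fun z => iteratedDeriv k f z * g z)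

def BoundedOp (α β : ℝ) (T : (ℂ → ℂ) → (ℂ → ℂ)) : Prop :=
  ∃ C > 0, ∀ f, MemBloch α f → MemBloch β (T f) ∧ bNorm β (T f) ≤ C * bNorm α f

def CompactOp (α β : ℝ) (T : (ℂ → ℂ) → (ℂ → ℂ)) : Prop :=
  BoundedOp α β T ∧
    ∀ (F : ℕ → ℂ → ℂ) (M : ℝ), (∀ j, MemBloch α (F j)) → (∀ j, bNorm α (F j) ≤ M) →
      ∃ (φ : ℕ → ℕ) (h : ℂ → ℂ), StrictMono φ ∧ MemBloch β h ∧
        Tendsto (fun j => bNorm β (T (F (φ j)) - h)) atTop (nhds 0)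

def fwi (α : ℝ) (i : ℕ) (w : ℂ) : ℂ → ℂ :=
  fun z => z ^ i / (1 - (starRingEnd ℂ) w * z) ^ ((α : ℂ) + (i : ℂ))

lemma udisk_open : IsOpen UDisk := isOpen_ball

lemma mem_udisk {z : ℂ} : z ∈ UDisk ↔ ‖z‖ < 1 := by
  simp [UDisk, Metric.mem_ball, Complex.dist_eq]

lemma one_sub_sq_pos {z : ℂ} (hz : z ∈ UDisk) : 0 < 1 - ‖z‖ ^ 2 := by
  rw [mem_udisk] at hz
  nlinarith [norm_nonneg z]

lemma smul_mem_udisk {z : ℂ} (hz : z ∈ UDisk) {t : ℝ} (ht0 : 0 ≤ t) (ht1 : t ≤ 1) :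
    (t : ℂ) * z ∈ UDisk := by
  rw [mem_udisk] at hz ⊢
  rw [norm_mul, Complex.norm_real, Real.norm_eq_abs, _root_.abs_of_nonneg ht0]
  calc t * ‖z‖ ≤ 1 * ‖z‖ := by
        exact mul_le_mul_of_nonneg_right ht1 (norm_nonneg z)
    _ = ‖z‖ := one_mul _
    _ < 1 := hz

lemma derivContOn {h : ℂ → ℂ} (hh : DifferentiableOn ℂ h UDisk) :
    ContinuousOn (deriv h) UDisk :=
  ((hh.analyticOnNhd udisk_open).deriv).continuousOn

lemma derivDiffOn {h : ℂ → ℂ} (hh : DifferentiableOn ℂ h UDisk) :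
    DifferentiableOn ℂ (deriv h) UDisk :=
  ((hh.analyticOnNhd udisk_open).deriv).differentiableOn

lemma intOp_apply_zero (h : ℂ → ℂ) : intOp h 0 = 0 := by simp [intOp]

lemma intOp_hasDerivAt {h : ℂ → ℂ} (hh : DifferentiableOn ℂ h UDisk) {z₀ : ℂ}
    (hz₀ : z₀ ∈ UDisk) : HasDerivAt (intOp h) (h z₀) z₀ := by
  have hr₀ : ‖z₀‖ < 1 := mem_udisk.mp hz₀
  set r₀ := ‖z₀‖ with hr₀def
  set ε : ℝ := (1 - r₀) / 2 with hεdef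
  have hεpos : 0 < ε := by simp only [hεdef]; linarith
  set ρ : ℝ := (1 + r₀) / 2 with hρdef
  have hρ1 : ρ < 1 := by simp only [hρdef]; linarith
  have hρ0 : 0 ≤ ρ := by have := norm_nonneg z₀; simp only [hρdef]; linarith
  have hKsub : Metric.closedBall (0:ℂ) ρ ⊆ UDisk := by
    intro w hw
    rw [Metric.mem_closedBall, Complex.dist_eq, sub_zero] at hw
    exact mem_udisk.mpr (lt_of_le_of_lt hw hρ1)
  -- membership facts
  have hmemK : ∀ x ∈ Metric.ball z₀ ε, ∀ t : ℝ, |t| ≤ 1 → (↑t * x) ∈ Metric.closedBall (0:ℂ) ρ := by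
    intro x hx t ht
    rw [Metric.mem_ball, Complex.dist_eq] at hx
    have hxle : ‖x‖ < ρ := by
      calc ‖x‖ ≤ ‖x - z₀‖ + ‖z₀‖ := by
            simpa using norm_add_le (x - z₀) z₀
        _ < ε + r₀ := by linarith
        _ = ρ := by simp only [hεdef, hρdef]; ring
    rw [Metric.mem_closedBall, Complex.dist_eq, sub_zero, norm_mul, Complex.norm_real, Real.norm_eq_abs]
    calc |t| * ‖x‖ ≤ 1 * ρ := by
          apply mul_le_mul ht hxle.le (norm_nonneg x) zero_le_one
      _ = ρ := one_mul ρ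
  have hmemD : ∀ x ∈ Metric.ball z₀ ε, ∀ t : ℝ, |t| ≤ 1 → (↑t * x) ∈ UDisk :=
    fun x hx t ht => hKsub (hmemK x hx t ht)
  -- bounds on compact set
  have hcont : ContinuousOn h UDisk := hh.continuousOn
  have hdcont : ContinuousOn (deriv h) UDisk := derivContOn hh
  obtain ⟨M₁, hM₁⟩ := (isCompact_closedBall (0:ℂ) ρ).exists_bound_of_continuousOn
    (hcont.mono hKsub)
  obtain ⟨M₂, hM₂⟩ := (isCompact_closedBall (0:ℂ) ρ).exists_bound_of_continuousOn
    (hdcont.mono hKsub)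
  have hM₂0 : 0 ≤ M₂ := le_trans (norm_nonneg _) (hM₂ 0 (Metric.mem_closedBall_self hρ0))
  set F : ℂ → ℝ → ℂ := fun x t => x * h (↑t * x) with hF
  set F' : ℂ → ℝ → ℂ := fun x t => h (↑t * x) + x * (deriv h (↑t * x) * ↑t) with hF'
  have habs : ∀ t : ℝ, t ∈ Set.uIcc (0:ℝ) 1 → |t| ≤ 1 := by
    intro t ht
    rw [Set.uIcc_of_le (zero_le_one)] at ht
    rw [_root_.abs_of_nonneg ht.1]; exact ht.2
  have habs' : ∀ t : ℝ, t ∈ Set.uIoc (0:ℝ) 1 → |t| ≤ 1 := by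
    intro t ht
    rw [Set.uIoc_of_le (zero_le_one)] at ht
    rw [_root_.abs_of_nonneg ht.1.le]; exact ht.2
  -- measurability of F x for x near z₀
  have hcont_t : ∀ x ∈ Metric.ball z₀ ε, ContinuousOn (F x) (Set.uIcc (0:ℝ) 1) := by
    intro x hx
    apply continuousOn_const.mul
    apply hcont.comp ((Complex.continuous_ofReal.mul continuous_const).continuousOn)
    intro t ht; exact hmemD x hx t (habs t ht)
  have hcont_t' : ∀ x ∈ Metric.ball z₀ ε, ContinuousOn (F' x) (Set.uIcc (0:ℝ) 1) := by
    intro x hx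
    have hmap : Set.MapsTo (fun t : ℝ => (↑t * x : ℂ)) (Set.uIcc (0:ℝ) 1) UDisk :=
      fun t ht => hmemD x hx t (habs t ht)
    have hc : ContinuousOn (fun t : ℝ => (↑t * x : ℂ)) (Set.uIcc (0:ℝ) 1) :=
      (Complex.continuous_ofReal.mul continuous_const).continuousOn
    exact (hcont.comp hc hmap).add
      (continuousOn_const.mul ((hdcont.comp hc hmap).mul
        Complex.continuous_ofReal.continuousOn))
  have hz₀ball : z₀ ∈ Metric.ball z₀ ε := Metric.mem_ball_self hεpos
  have hF_meas : ∀ᶠ x in 𝓝 z₀, MeasureTheory.AEStronglyMeasurable (F x)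
      (MeasureTheory.volume.restrict (Set.uIoc (0:ℝ) 1)) := by
    filter_upwards [Metric.ball_mem_nhds z₀ hεpos] with x hx
    exact ((hcont_t x hx).mono Set.uIoc_subset_uIcc).aestronglyMeasurable measurableSet_uIoc
  have hF_int : IntervalIntegrable (F z₀) MeasureTheory.volume 0 1 :=
    (hcont_t z₀ hz₀ball).intervalIntegrable
  have hF'_meas : MeasureTheory.AEStronglyMeasurable (F' z₀)
      (MeasureTheory.volume.restrict (Set.uIoc (0:ℝ) 1)) :=
    ((hcont_t' z₀ hz₀ball).mono Set.uIoc_subset_uIcc).aestronglyMeasurable measurableSet_uIoc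
  have h_bound : ∀ᵐ t ∂MeasureTheory.volume, t ∈ Set.uIoc (0:ℝ) 1 →
      ∀ x ∈ Metric.ball z₀ ε, ‖F' x t‖ ≤ M₁ + M₂ := by
    apply MeasureTheory.ae_of_all
    intro t ht x hx
    have h1 : ‖h (↑t * x)‖ ≤ M₁ := hM₁ _ (hmemK x hx t (habs' t ht))
    have h2 : ‖deriv h (↑t * x)‖ ≤ M₂ := hM₂ _ (hmemK x hx t (habs' t ht))
    have hx1 : ‖x‖ ≤ 1 := by
      rw [Metric.mem_ball, Complex.dist_eq] at hx
      calc ‖x‖ ≤ ‖x - z₀‖ + ‖z₀‖ := by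
            simpa using norm_add_le (x - z₀) z₀
        _ ≤ ε + r₀ := by linarith
        _ ≤ 1 := by simp only [hεdef]; linarith
    calc ‖F' x t‖ ≤ ‖h (↑t * x)‖ + ‖x * (deriv h (↑t * x) * ↑t)‖ := norm_add_le _ _
      _ ≤ M₁ + M₂ := by
          have : ‖x * (deriv h (↑t * x) * ↑t)‖ =
              ‖x‖ * (‖deriv h (↑t * x)‖ * |t|) := by
            simp [map_mul, Complex.norm_real, Real.norm_eq_abs]
          rw [this]
          have : ‖x‖ * (‖deriv h (↑t * x)‖ * |t|) ≤ 1 * (M₂ * 1) := by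
            apply mul_le_mul hx1 _ (by positivity) zero_le_one
            exact mul_le_mul h2 (habs' t ht) (abs_nonneg t) hM₂0
          linarith [h1]
  have bound_int : IntervalIntegrable (fun _ : ℝ => M₁ + M₂) MeasureTheory.volume 0 1 :=
    intervalIntegrable_const
  have h_diff : ∀ᵐ t ∂MeasureTheory.volume, t ∈ Set.uIoc (0:ℝ) 1 →
      ∀ x ∈ Metric.ball z₀ ε, HasDerivAt (fun y => F y t) (F' x t) x := by
    apply MeasureTheory.ae_of_all
    intro t ht x hx
    have hmem : (↑t * x) ∈ UDisk := hmemD x hx t (habs' t ht)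
    have h1 : HasDerivAt (fun y : ℂ => (↑t : ℂ) * y) ((↑t : ℂ)) x := by
      simpa using (hasDerivAt_id x).const_mul (↑t : ℂ)
    have h2 : HasDerivAt h (deriv h (↑t * x)) (↑t * x) :=
      (hh.differentiableAt (udisk_open.mem_nhds hmem)).hasDerivAt
    have h3 : HasDerivAt (fun y : ℂ => h (↑t * y)) (deriv h (↑t * x) * ↑t) x := by
      exact h2.comp x h1
    have h4 := (hasDerivAt_id x).mul h3
    simp only [one_mul, id_eq] at h4
    exact h4
  have key := intervalIntegral.hasDerivAt_integral_of_dominated_loc_of_deriv_le (Metric.ball_mem_nhds z₀ hεpos)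
    hF_meas hF_int hF'_meas h_bound bound_int h_diff
  have hint' : IntervalIntegrable (F' z₀) MeasureTheory.volume 0 1 := key.1
  have hder := key.2
  have heq : (fun x => ∫ t in (0:ℝ)..1, F x t) = intOp h := by
    funext x
    simp only [hF, intOp]
    rw [intervalIntegral.integral_const_mul]
  rw [heq] at hder
  -- identify the integral with h z₀
  have hval : (∫ t in (0:ℝ)..1, F' z₀ t) = h z₀ := by
    have hder_t : ∀ t ∈ Set.uIcc (0:ℝ) 1,
        HasDerivAt (fun s : ℝ => (↑s : ℂ) * h (↑s * z₀)) (F' z₀ t) t := by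
      intro t ht
      have hmem : (↑t * z₀) ∈ UDisk := hmemD z₀ hz₀ball t (habs t ht)
      have hu : HasDerivAt (fun s : ℂ => s * h (s * z₀))
          (1 * h (↑t * z₀) + ↑t * (deriv h (↑t * z₀) * z₀)) ↑t := by
        have h2 : HasDerivAt h (deriv h (↑t * z₀)) (↑t * z₀) :=
          (hh.differentiableAt (udisk_open.mem_nhds hmem)).hasDerivAt
        have h3 : HasDerivAt (fun s : ℂ => h (s * z₀)) (deriv h (↑t * z₀) * z₀) ↑t := by
          exact h2.comp (↑t : ℂ) (hasDerivAt_mul_const z₀)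
        exact (hasDerivAt_id (↑t : ℂ)).mul h3
      have := hu.comp_ofReal
      convert this using 1
      simp only [hF']
      ring
    have := intervalIntegral.integral_eq_sub_of_hasDerivAt hder_t hint'
    rw [this]
    simp
  rw [hval] at hder
  exact hder

lemma intOp_diffOn {h : ℂ → ℂ} (hh : DifferentiableOn ℂ h UDisk) :
    DifferentiableOn ℂ (intOp h) UDisk := fun z hz =>
  ((intOp_hasDerivAt hh hz).differentiableAt).differentiableWithinAt

lemma intOp_iter_diffOn {h : ℂ → ℂ} (hh : DifferentiableOn ℂ h UDisk) (k : ℕ) :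
    DifferentiableOn ℂ (intOp^[k] h) UDisk := by
  induction k with
  | zero => simpa using hh
  | succ m ih =>
    rw [Function.iterate_succ_apply']
    exact intOp_diffOn ih

lemma intOp_iter_hasDerivAt {h : ℂ → ℂ} (hh : DifferentiableOn ℂ h UDisk) (k : ℕ)
    {z : ℂ} (hz : z ∈ UDisk) :
    HasDerivAt (intOp^[k+1] h) (intOp^[k] h z) z := by
  rw [Function.iterate_succ_apply']
  exact intOp_hasDerivAt (intOp_iter_diffOn hh k) hz

lemma intOp_growth {h : ℂ → ℂ} {A γ : ℝ} (hh : ContinuousOn h UDisk) (hA : 0 ≤ A)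
    (hγ : 1 < γ) (hb : ∀ w ∈ UDisk, ‖h w‖ ≤ A * (1 - ‖w‖ ^ 2) ^ (-γ)) :
    ∀ z ∈ UDisk, ‖intOp h z‖ ≤
      (2 ^ (γ - 1) / (γ - 1)) * A * (1 - ‖z‖ ^ 2) ^ (-(γ - 1)) := by
  intro z hz
  rcases eq_or_ne z 0 with rfl | hz0
  · rw [intOp]
    simp only [zero_mul, norm_zero]
    rw [show (1:ℝ) - (0:ℝ) ^ 2 = 1 by norm_num, Real.one_rpow]
    have h2 : (0:ℝ) ≤ 2 ^ (γ - 1) := Real.rpow_nonneg (by norm_num) _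
    have h3 : (0:ℝ) < γ - 1 := by linarith
    have := mul_nonneg (div_nonneg h2 h3.le) hA
    linarith
  have hr1 : ‖z‖ < 1 := mem_udisk.mp hz
  set r : ℝ := ‖z‖ with hrdef
  have hr0 : 0 < r := norm_pos_iff.mpr hz0
  have h1r : 0 < 1 - r := by linarith
  -- pointwise bound on the integrand
  have hptw : ∀ t ∈ Set.uIcc (0:ℝ) 1, ‖h (↑t * z)‖ ≤ A * (1 - t * r) ^ (-γ) := by
    intro t ht
    rw [Set.uIcc_of_le zero_le_one] at ht
    have hmem : (↑t * z) ∈ UDisk := smul_mem_udisk hz ht.1 ht.2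
    have habs : ‖↑t * z‖ = t * r := by
      rw [norm_mul, Complex.norm_real, Real.norm_eq_abs, _root_.abs_of_nonneg ht.1]
    have h1 : ‖h (↑t * z)‖ ≤ A * (1 - (t*r) ^ 2) ^ (-γ) := by
      have := hb _ hmem; rwa [habs] at this
    refine h1.trans (mul_le_mul_of_nonneg_left ?_ hA)
    have htr1 : t * r < 1 := by
      have := mul_le_of_le_one_left hr0.le ht.2
      linarith
    have htr0 : 0 ≤ t * r := mul_nonneg ht.1 hr0.le
    apply Real.rpow_le_rpow_of_nonpos (by nlinarith) (by nlinarith) (by linarith)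
  -- integrability of the bound
  have hcont_bound : ContinuousOn (fun t : ℝ => A * (1 - t * r) ^ (-γ)) (Set.uIcc (0:ℝ) 1) := by
    apply continuousOn_const.mul
    apply ContinuousOn.rpow_const
    · exact (continuousOn_const.sub (continuousOn_id.mul continuousOn_const))
    · intro t ht
      rw [Set.uIcc_of_le zero_le_one] at ht
      left
      have : t * r < 1 := by nlinarith [ht.1, ht.2]
      exact ne_of_gt (by nlinarith [ht.1, ht.2])
  have hbint : IntervalIntegrable (fun t : ℝ => A * (1 - t * r) ^ (-γ))
      MeasureTheory.volume 0 1 := hcont_bound.intervalIntegrable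
  -- FTC for the bound
  have hFTC : (∫ t in (0:ℝ)..1, A * (1 - t * r) ^ (-γ)) =
      (A / (r * (γ - 1))) * (1 - r) ^ (1 - γ) - (A / (r * (γ - 1))) * (1:ℝ) ^ (1 - γ) := by
    have hder : ∀ t ∈ Set.uIcc (0:ℝ) 1,
        HasDerivAt (fun t : ℝ => (A / (r * (γ - 1))) * (1 - t * r) ^ (1 - γ))
          (A * (1 - t * r) ^ (-γ)) t := by
      intro t ht
      rw [Set.uIcc_of_le zero_le_one] at ht
      have hpos : 0 < 1 - t * r := by nlinarith [ht.1, ht.2]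
      have hu : HasDerivAt (fun t : ℝ => 1 - t * r) (-r) t := by
        simpa using ((hasDerivAt_id t).mul_const r).const_sub 1
      have hrp : HasDerivAt (fun x : ℝ => x ^ (1 - γ)) ((1 - γ) * (1 - t * r) ^ (1 - γ - 1))
          (1 - t * r) := Real.hasDerivAt_rpow_const (Or.inl (ne_of_gt hpos))
      have hcomp := hrp.comp t hu
      have this2 := hcomp.const_mul (A / (r * (γ - 1)))
      refine this2.congr_deriv ?_
      have hexp : 1 - γ - 1 = -γ := by ring
      rw [hexp]
      have hne : r * (γ - 1) ≠ 0 := ne_of_gt (mul_pos hr0 (by linarith))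
      have hrne : r ≠ 0 := ne_of_gt hr0
      have hγne : γ - 1 ≠ 0 := ne_of_gt (by linarith)
      field_simp
      ring
    rw [intervalIntegral.integral_eq_sub_of_hasDerivAt hder hbint]
    norm_num
  -- main estimate
  have hnorm : ‖∫ t in (0:ℝ)..1, h (↑t * z)‖ ≤ |∫ t in (0:ℝ)..1, A * (1 - t * r) ^ (-γ)| := by
    apply intervalIntegral.norm_integral_le_abs_of_norm_le _ hbint
    rw [MeasureTheory.ae_restrict_iff' measurableSet_uIoc]
    exact MeasureTheory.ae_of_all _ fun t ht => hptw t (Set.uIoc_subset_uIcc ht)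
  have hIval : |∫ t in (0:ℝ)..1, A * (1 - t * r) ^ (-γ)| ≤
      (A / (r * (γ - 1))) * (1 - r) ^ (1 - γ) := by
    rw [hFTC, Real.one_rpow]
    set c := A / (r * (γ - 1)) with hcdef
    have hc0 : 0 ≤ c := by
      rw [hcdef]
      exact div_nonneg hA (le_of_lt (mul_pos hr0 (by linarith)))
    have hone : (1:ℝ) ≤ (1 - r) ^ (1 - γ) :=
      Real.one_le_rpow_of_pos_of_le_one_of_nonpos h1r (by linarith) (by linarith)
    have hge : c * 1 ≤ c * (1 - r) ^ (1 - γ) := mul_le_mul_of_nonneg_left hone hc0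
    rw [mul_one] at hge
    rw [_root_.abs_of_nonneg (by linarith)]
    linarith
  have h2 : 0 < 1 - r ^ 2 := one_sub_sq_pos hz
  have hstep : (1 - r) ^ (-(γ-1)) ≤ 2 ^ (γ-1) * (1 - r ^ 2) ^ (-(γ-1)) := by
    have hle : (1 - r ^ 2)/2 ≤ 1 - r := by nlinarith
    calc (1 - r) ^ (-(γ-1)) ≤ ((1 - r ^ 2)/2) ^ (-(γ-1)) :=
          Real.rpow_le_rpow_of_nonpos (by positivity) hle (by linarith)
      _ = 2 ^ (γ-1) * (1 - r ^ 2) ^ (-(γ-1)) := by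
          rw [Real.div_rpow h2.le zero_le_two, Real.rpow_neg zero_le_two,
            div_eq_mul_inv, inv_inv]
          ring
  calc ‖intOp h z‖ = r * ‖∫ t in (0:ℝ)..1, h (↑t * z)‖ := by
        rw [intOp]
        simp only [norm_mul]
        rfl
      _ ≤ r * ((A / (r * (γ - 1))) * (1 - r) ^ (1 - γ)) :=
        mul_le_mul_of_nonneg_left (hnorm.trans hIval) hr0.le
      _ = (A / (γ - 1)) * (1 - r) ^ (-(γ-1)) := by
        rw [show (1 - γ) = -(γ-1) by ring]
        have hrne : r ≠ 0 := ne_of_gt hr0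
        have hγne : γ - 1 ≠ 0 := ne_of_gt (by linarith)
        field_simp
      _ ≤ (A / (γ - 1)) * (2 ^ (γ-1) * (1 - r ^ 2) ^ (-(γ-1))) :=
        mul_le_mul_of_nonneg_left hstep (div_nonneg hA (by linarith))
      _ = (2 ^ (γ - 1) / (γ - 1)) * A * (1 - r ^ 2) ^ (-(γ - 1)) := by ring

lemma intOp_iter_growth (β : ℝ) (hβ : 0 < β) (k : ℕ) :
    ∃ c : ℝ, 0 ≤ c ∧ ∀ (h : ℂ → ℂ) (A : ℝ), DifferentiableOn ℂ h UDisk → 0 ≤ A →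
      (∀ w ∈ UDisk, ‖h w‖ ≤ A * (1 - ‖w‖ ^ 2) ^ (-(β + k))) →
      ∀ z ∈ UDisk, ‖intOp^[k] h z‖ ≤ c * A * (1 - ‖z‖ ^ 2) ^ (-β) := by
  induction k with
  | zero =>
    refine ⟨1, zero_le_one, fun h A hh hA hb z hz => ?_⟩
    simpa using hb z hz
  | succ m ih =>
    obtain ⟨c, hc0, hc⟩ := ih
    set d : ℝ := 2 ^ (β + m) / (β + m) with hddef
    have hd0 : 0 ≤ d := by
      have h1 : (0:ℝ) ≤ 2 ^ (β + m) := Real.rpow_nonneg (by norm_num) _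
      have h2 : (0:ℝ) < β + m := by positivity
      exact div_nonneg h1 h2.le
    refine ⟨c * d, mul_nonneg hc0 hd0, fun h A hh hA hb z hz => ?_⟩
    have hγ : (1:ℝ) < β + (m+1) := by
      have : (0:ℝ) ≤ (m:ℝ) := Nat.cast_nonneg m
      linarith
    have hstep := intOp_growth hh.continuousOn hA hγ (by
      intro w hw
      have := hb w hw
      rwa [show ((m+1 : ℕ) : ℝ) = (m : ℝ) + 1 by push_cast; ring] at this)
    have hexp : β + (m+1) - 1 = β + m := by ring
    rw [hexp] at hstep
    have happ := hc (intOp h) (d * A) (intOp_diffOn hh) (mul_nonneg hd0 hA) (by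
      intro w hw
      have := hstep w hw
      calc ‖intOp h w‖ ≤ d * A * (1 - ‖w‖ ^ 2) ^ (-(β + m)) := this
        _ = d * A * (1 - ‖w‖ ^ 2) ^ (-(β + (m:ℝ))) := rfl)
    rw [Function.iterate_succ_apply]
    calc ‖intOp^[m] (intOp h) z‖ ≤ c * (d * A) * (1 - ‖z‖ ^ 2) ^ (-β) :=
          happ z hz
      _ = c * d * A * (1 - ‖z‖ ^ 2) ^ (-β) := by ring

lemma ftc_seg {f : ℂ → ℂ} (hf : DifferentiableOn ℂ f UDisk) {z : ℂ} (hz : z ∈ UDisk) :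
    f z - f 0 = intOp (deriv f) z := by
  have hder : ∀ t ∈ Set.uIcc (0:ℝ) 1,
      HasDerivAt (fun s : ℝ => f (↑s * z)) (z * deriv f (↑t * z)) t := by
    intro t ht
    rw [Set.uIcc_of_le zero_le_one] at ht
    have hmem : (↑t * z) ∈ UDisk := smul_mem_udisk hz ht.1 ht.2
    have h2 : HasDerivAt f (deriv f (↑t * z)) (↑t * z) :=
      (hf.differentiableAt (udisk_open.mem_nhds hmem)).hasDerivAt
    have h3 : HasDerivAt (fun s : ℂ => f (s * z)) (deriv f (↑t * z) * z) ↑t := by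
      exact h2.comp (↑t : ℂ) (hasDerivAt_mul_const z)
    have h4 := h3.comp_ofReal
    rw [mul_comm] at h4
    exact h4
  have hint : IntervalIntegrable (fun t : ℝ => z * deriv f (↑t * z))
      MeasureTheory.volume 0 1 := by
    apply ContinuousOn.intervalIntegrable
    apply continuousOn_const.mul
    apply (derivContOn hf).comp ((Complex.continuous_ofReal.mul continuous_const).continuousOn)
    intro t ht
    rw [Set.uIcc_of_le zero_le_one] at ht
    exact smul_mem_udisk hz ht.1 ht.2
  have := intervalIntegral.integral_eq_sub_of_hasDerivAt hder hint
  simp only [Complex.ofReal_one, Complex.ofReal_zero, one_mul, zero_mul] at this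
  rw [intervalIntegral.integral_const_mul] at this
  rw [intOp, ← this]

lemma zero_mem_udisk : (0:ℂ) ∈ UDisk := by rw [mem_udisk]; simp

instance : Nonempty UDisk := ⟨⟨0, zero_mem_udisk⟩⟩

lemma bSemi_nonneg (α : ℝ) (f : ℂ → ℂ) : 0 ≤ bSemi α f := by
  apply Real.iSup_nonneg
  intro z
  have h1 : (0:ℝ) < 1 - ‖(z:ℂ)‖ ^ 2 := one_sub_sq_pos z.2
  have := Real.rpow_nonneg h1.le α
  positivity

lemma bNorm_nonneg (α : ℝ) (f : ℂ → ℂ) : 0 ≤ bNorm α f :=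
  add_nonneg (norm_nonneg _) (bSemi_nonneg α f)

lemma le_bSemi {α : ℝ} {f : ℂ → ℂ} {C : ℝ}
    (hC : ∀ w ∈ UDisk, (1 - ‖w‖ ^ 2) ^ α * ‖deriv f w‖ ≤ C)
    {z : ℂ} (hz : z ∈ UDisk) :
    (1 - ‖z‖ ^ 2) ^ α * ‖deriv f z‖ ≤ bSemi α f := by
  have hbdd : BddAbove (Set.range fun w : UDisk =>
      (1 - ‖(w:ℂ)‖ ^ 2) ^ α * ‖deriv f (w:ℂ)‖) := by
    refine ⟨C, ?_⟩
    rintro x ⟨w, rfl⟩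
    exact hC w w.2
  exact le_ciSup hbdd ⟨z, hz⟩

lemma bSemi_le {α : ℝ} {f : ℂ → ℂ} {C : ℝ}
    (hC : ∀ z ∈ UDisk, (1 - ‖z‖ ^ 2) ^ α * ‖deriv f z‖ ≤ C) :
    bSemi α f ≤ C := ciSup_le fun z => hC z z.2

lemma abs_f0_le_bNorm (α : ℝ) (f : ℂ → ℂ) : ‖f 0‖ ≤ bNorm α f := by
  have := bSemi_nonneg α f; rw [bNorm]; linarith

lemma bSemi_le_bNorm (α : ℝ) (f : ℂ → ℂ) : bSemi α f ≤ bNorm α f := by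
  have := norm_nonneg (f 0); rw [bNorm]; linarith

lemma log_ge_log2 {z : ℂ} (hz : z ∈ UDisk) :
    Real.log 2 ≤ Real.log (2 / (1 - ‖z‖ ^ 2)) := by
  have h1 : 0 < 1 - ‖z‖ ^ 2 := one_sub_sq_pos hz
  have h2 : 1 - ‖z‖ ^ 2 ≤ 1 := by nlinarith [norm_nonneg z]
  apply Real.log_le_log (by norm_num)
  rw [le_div_iff₀ h1]
  linarith

lemma log2_pos' : (0:ℝ) < Real.log 2 := Real.log_pos (by norm_num)

lemma bloch_growth {f : ℂ → ℂ} (hf : MemBloch 1 f) {z : ℂ} (hz : z ∈ UDisk) :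
    ‖f z‖ ≤
      (1 / Real.log 2 + 1) * bNorm 1 f * Real.log (2 / (1 - ‖z‖ ^ 2)) := by
  obtain ⟨hd, C, hC⟩ := hf
  set S := bSemi 1 f with hSdef
  have hS0 : 0 ≤ S := bSemi_nonneg 1 f
  have hr1 : ‖z‖ < 1 := mem_udisk.mp hz
  set r : ℝ := ‖z‖ with hrdef
  have hr0 : 0 ≤ r := norm_nonneg z
  have h1r : 0 < 1 - r := by linarith
  -- pointwise derivative bound
  have hptS : ∀ w ∈ UDisk, ‖deriv f w‖ ≤ S / (1 - ‖w‖ ^ 2) := by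
    intro w hw
    have h1 := le_bSemi hC hw
    rw [Real.rpow_one] at h1
    have h2 : 0 < 1 - ‖w‖ ^ 2 := one_sub_sq_pos hw
    rw [le_div_iff₀ h2, mul_comm]
    exact h1
  -- bound the integrand
  have hptw : ∀ t ∈ Set.uIcc (0:ℝ) 1, ‖deriv f (↑t * z)‖ ≤ S / (1 - t * r) := by
    intro t ht
    rw [Set.uIcc_of_le zero_le_one] at ht
    have hmem : (↑t * z) ∈ UDisk := smul_mem_udisk hz ht.1 ht.2
    have habs : ‖↑t * z‖ = t * r := by
      rw [norm_mul, Complex.norm_real, Real.norm_eq_abs, _root_.abs_of_nonneg ht.1]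
    have htr1 : t * r < 1 := by
      have := mul_le_of_le_one_left hr0 ht.2
      linarith
    have htr0 : 0 ≤ t * r := mul_nonneg ht.1 hr0
    have h1 := hptS _ hmem
    rw [habs] at h1
    refine h1.trans ?_
    apply div_le_div_of_nonneg_left hS0 (by nlinarith) (by nlinarith)
  -- FTC representation
  have hftc := ftc_seg hd hz
  have h2pos : 0 < 1 - r ^ 2 := one_sub_sq_pos hz
  have hne : ∀ t ∈ Set.uIcc (0:ℝ) 1, (0:ℝ) < 1 - t * r := by
    intro t ht
    rw [Set.uIcc_of_le zero_le_one] at ht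
    have := mul_le_of_le_one_left hr0 ht.2
    have h0 : 0 ≤ t * r := mul_nonneg ht.1 hr0
    linarith
  have hbint : IntervalIntegrable (fun t : ℝ => S * r / (1 - t * r))
      MeasureTheory.volume 0 1 := by
    apply ContinuousOn.intervalIntegrable
    apply continuousOn_const.div
    · exact continuousOn_const.sub (continuousOn_id.mul continuousOn_const)
    · intro t ht
      exact ne_of_gt (hne t ht)
  have hFTC : (∫ t in (0:ℝ)..1, S * r / (1 - t * r)) = -(S * Real.log (1 - r)) := by
    have hder : ∀ t ∈ Set.uIcc (0:ℝ) 1,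
        HasDerivAt (fun t : ℝ => -(S * Real.log (1 - t * r))) (S * r / (1 - t * r)) t := by
      intro t ht
      have hpos := hne t ht
      have hu : HasDerivAt (fun t : ℝ => 1 - t * r) (-r) t := by
        simpa using ((hasDerivAt_id t).mul_const r).const_sub 1
      have hlog := (Real.hasDerivAt_log (ne_of_gt hpos)).comp t hu
      have hcm := (hlog.const_mul S).neg
      refine hcm.congr_deriv ?_
      field_simp
    rw [intervalIntegral.integral_eq_sub_of_hasDerivAt hder hbint]
    norm_num
  have hbound : ‖intOp (deriv f) z‖ ≤ -(S * Real.log (1 - r)) := by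
    have hrepr : intOp (deriv f) z = ∫ t in (0:ℝ)..1, z * deriv f (↑t * z) := by
      rw [intOp, intervalIntegral.integral_const_mul]
    rw [hrepr]
    have hle : ‖∫ t in (0:ℝ)..1, z * deriv f (↑t * z)‖ ≤
        |∫ t in (0:ℝ)..1, S * r / (1 - t * r)| := by
      apply intervalIntegral.norm_integral_le_abs_of_norm_le _ hbint
      rw [MeasureTheory.ae_restrict_iff' measurableSet_uIoc]
      apply MeasureTheory.ae_of_all
      intro t ht
      have ht' := Set.uIoc_subset_uIcc ht
      have h1 := hptw t ht'
      have hpos := hne t ht'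
      calc ‖z * deriv f (↑t * z)‖ = r * ‖deriv f (↑t * z)‖ := by
            rw [norm_mul]
        _ ≤ r * (S / (1 - t * r)) := mul_le_mul_of_nonneg_left h1 hr0
        _ = S * r / (1 - t * r) := by ring
    rw [hFTC] at hle
    have hlogle : Real.log (1 - r) ≤ 0 := Real.log_nonpos (by linarith) (by linarith)
    have habs : |(-(S * Real.log (1 - r)))| = -(S * Real.log (1 - r)) := by
      apply _root_.abs_of_nonneg
      nlinarith
    rw [habs] at hle
    exact hle
  set L := Real.log (2 / (1 - r ^ 2)) with hLdef
  have hL2 : Real.log 2 ≤ L := log_ge_log2 hz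
  have hL0 : 0 ≤ L := le_trans log2_pos'.le hL2
  have hlog_le : -Real.log (1 - r) ≤ L := by
    rw [← Real.log_inv]
    apply Real.log_le_log (by positivity)
    rw [inv_eq_one_div, div_le_div_iff₀ h1r h2pos]
    nlinarith
  -- assemble
  have e1 : ‖f z‖ ≤ ‖f 0‖ + S * L := by
    have : ‖f z‖ ≤ ‖f 0‖ + ‖f z - f 0‖ := by
      have := norm_add_le (f 0) (f z - f 0)
      simpa using this
    have h2 : ‖f z - f 0‖ ≤ S * L := by
      rw [hftc]
      refine hbound.trans ?_
      have := mul_le_mul_of_nonneg_left hlog_le hS0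
      nlinarith
    linarith
  have hlog2ne : Real.log 2 ≠ 0 := ne_of_gt log2_pos'
  have e2 : ‖f 0‖ ≤ (‖f 0‖ / Real.log 2) * L := by
    have h1 : (‖f 0‖ / Real.log 2) * Real.log 2 ≤
        (‖f 0‖ / Real.log 2) * L :=
      mul_le_mul_of_nonneg_left hL2 (div_nonneg (norm_nonneg _) log2_pos'.le)
    rwa [div_mul_cancel₀ _ hlog2ne] at h1
  have e3 : (‖f 0‖ / Real.log 2 + S) ≤
      (1 / Real.log 2 + 1) * (‖f 0‖ + S) := by
    have hd : (1 / Real.log 2 + 1) * (‖f 0‖ + S) -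
        (‖f 0‖ / Real.log 2 + S) = S / Real.log 2 + ‖f 0‖ := by
      field_simp
      ring
    have h4 : 0 ≤ S / Real.log 2 := div_nonneg hS0 log2_pos'.le
    have h5 := norm_nonneg (f 0)
    linarith
  have e4 := mul_le_mul_of_nonneg_right e3 hL0
  have hbn : bNorm 1 f = ‖f 0‖ + S := rfl
  rw [hbn]
  calc ‖f z‖ ≤ ‖f 0‖ + S * L := e1
    _ ≤ (‖f 0‖ / Real.log 2) * L + S * L := by linarith [e2]
    _ = (‖f 0‖ / Real.log 2 + S) * L := by ring
    _ ≤ ((1 / Real.log 2 + 1) * (‖f 0‖ + S)) * L := e4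
    _ = (1 / Real.log 2 + 1) * (‖f 0‖ + S) * L := by ring

lemma cauchy_step {F : ℂ → ℂ} {A γ : ℝ} (hF : DifferentiableOn ℂ F UDisk) (hA : 0 ≤ A)
    (hγ : 0 ≤ γ) (hb : ∀ w ∈ UDisk, ‖F w‖ ≤ A * (1 - ‖w‖ ^ 2) ^ (-γ)) :
    ∀ z ∈ UDisk, ‖deriv F z‖ ≤
      (4 * 4 ^ γ) * A * (1 - ‖z‖ ^ 2) ^ (-(γ + 1)) := by
  intro z hz
  have hr1 : ‖z‖ < 1 := mem_udisk.mp hz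
  set r : ℝ := ‖z‖ with hrdef
  have hr0 : 0 ≤ r := norm_nonneg z
  set R : ℝ := (1 - r) / 2 with hRdef
  have hR0 : 0 < R := by simp only [hRdef]; linarith
  have h2pos : 0 < 1 - r ^ 2 := one_sub_sq_pos hz
  have hsub : Metric.closedBall z R ⊆ UDisk := by
    intro w hw
    rw [Metric.mem_closedBall, Complex.dist_eq] at hw
    rw [mem_udisk]
    calc ‖w‖ ≤ ‖w - z‖ + ‖z‖ := by
          simpa using norm_add_le (w - z) z
      _ ≤ R + r := by linarith
      _ < 1 := by simp only [hRdef]; linarith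
  have hdc : DiffContOnCl ℂ F (Metric.ball z R) := by
    apply DifferentiableOn.diffContOnCl
    rw [closure_ball z (ne_of_gt hR0)]
    exact hF.mono hsub
  set M : ℝ := 4 ^ γ * A * (1 - r ^ 2) ^ (-γ) with hMdef
  have hM : ∀ w ∈ Metric.sphere z R, ‖F w‖ ≤ M := by
    intro w hw
    have hwc : w ∈ Metric.closedBall z R := Metric.sphere_subset_closedBall hw
    have hwD : w ∈ UDisk := hsub hwc
    rw [Metric.mem_closedBall, Complex.dist_eq] at hwc
    have hwabs : ‖w‖ ≤ (1 + r) / 2 := by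
      calc ‖w‖ ≤ ‖w - z‖ + ‖z‖ := by
            simpa using norm_add_le (w - z) z
        _ ≤ R + r := by linarith
        _ = (1 + r) / 2 := by simp only [hRdef]; ring
    have hw2 : (1 - r ^ 2) / 4 ≤ 1 - ‖w‖ ^ 2 := by
      have h0 := norm_nonneg w
      nlinarith [hwabs, hr0, hr1]
    have hstep : (1 - ‖w‖ ^ 2) ^ (-γ) ≤ ((1 - r ^ 2) / 4) ^ (-γ) :=
      Real.rpow_le_rpow_of_nonpos (by positivity) hw2 (by linarith)
    have heq : ((1 - r ^ 2) / 4) ^ (-γ) = 4 ^ γ * (1 - r ^ 2) ^ (-γ) := by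
      have h4 : (4:ℝ) ^ (-γ) = ((4:ℝ) ^ γ)⁻¹ := Real.rpow_neg (by norm_num) γ
      rw [Real.div_rpow h2pos.le (by norm_num : (0:ℝ) ≤ 4), h4, div_eq_mul_inv, inv_inv]
      ring
    calc ‖F w‖ ≤ A * (1 - ‖w‖ ^ 2) ^ (-γ) := hb w hwD
      _ ≤ A * (4 ^ γ * (1 - r ^ 2) ^ (-γ)) := by
          rw [← heq]; exact mul_le_mul_of_nonneg_left hstep hA
      _ = M := by rw [hMdef]; ring
  have hcauchy := Complex.norm_deriv_le_of_forall_mem_sphere_norm_le hR0 hdc hM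
  have hM0 : 0 ≤ M := by
    rw [hMdef]
    have := Real.rpow_nonneg (by norm_num : (0:ℝ) ≤ 4) γ
    have := Real.rpow_nonneg h2pos.le (-γ)
    positivity
  have hfinal : M / R ≤ (4 * 4 ^ γ) * A * (1 - r ^ 2) ^ (-(γ + 1)) := by
    have h1 : M / R = M * (2 / (1 - r)) := by
      rw [hRdef, div_div_eq_mul_div, div_eq_mul_inv, div_eq_mul_inv]
      ring_nf
    have h2 : 2 / (1 - r) ≤ 4 / (1 - r ^ 2) := by
      rw [div_le_div_iff₀ (by linarith) h2pos]
      nlinarith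
    have h3 : M * (2 / (1 - r)) ≤ M * (4 / (1 - r ^ 2)) :=
      mul_le_mul_of_nonneg_left h2 hM0
    have h4 : M * (4 / (1 - r ^ 2)) = (4 * 4 ^ γ) * A * (1 - r ^ 2) ^ (-(γ + 1)) := by
      rw [hMdef, show -(γ + 1) = -γ + (-1) by ring, Real.rpow_add h2pos,
        Real.rpow_neg_one]
      field_simp
    linarith
  calc ‖deriv F z‖ = ‖deriv F z‖ := rfl
    _ ≤ M / R := hcauchy
    _ ≤ (4 * 4 ^ γ) * A * (1 - r ^ 2) ^ (-(γ + 1)) := hfinal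

lemma iter_cauchy (k : ℕ) : ∀ γ : ℝ, 0 ≤ γ → ∃ c : ℝ, 0 ≤ c ∧
    ∀ (F : ℂ → ℂ) (A : ℝ), DifferentiableOn ℂ F UDisk → 0 ≤ A →
      (∀ w ∈ UDisk, ‖F w‖ ≤ A * (1 - ‖w‖ ^ 2) ^ (-γ)) →
      ∀ z ∈ UDisk, ‖deriv^[k] F z‖ ≤
        c * A * (1 - ‖z‖ ^ 2) ^ (-(γ + k)) := by
  induction k with
  | zero =>
    intro γ hγ
    refine ⟨1, zero_le_one, fun F A hF hA hb z hz => ?_⟩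
    simpa using hb z hz
  | succ m ih =>
    intro γ hγ
    obtain ⟨c, hc0, hc⟩ := ih (γ + 1) (by linarith)
    have h4γ : (0:ℝ) ≤ 4 * 4 ^ γ := by
      have := Real.rpow_nonneg (by norm_num : (0:ℝ) ≤ 4) γ
      positivity
    refine ⟨c * (4 * 4 ^ γ), mul_nonneg hc0 h4γ, fun F A hF hA hb z hz => ?_⟩
    have hstep := cauchy_step hF hA hγ hb
    have happ := hc (deriv F) ((4 * 4 ^ γ) * A) (derivDiffOn hF) (mul_nonneg h4γ hA) (by
      intro w hw
      have := hstep w hw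
      rwa [show -(γ + 1) = -(γ + 1) by rfl] at this)
    rw [Function.iterate_succ_apply]
    have := happ z hz
    rw [show γ + 1 + (m:ℝ) = γ + ((m:ℕ) + 1 : ℕ) by push_cast; ring] at this
    calc ‖deriv^[m] (deriv F) z‖ ≤
        c * (4 * 4 ^ γ * A) * (1 - ‖z‖ ^ 2) ^ (-(γ + ((m:ℕ) + 1 : ℕ))) := this
      _ = c * (4 * 4 ^ γ) * A * (1 - ‖z‖ ^ 2) ^ (-(γ + ((m:ℕ) + 1 : ℕ))) := by ring

lemma eqOn_iterate_deriv {f g : ℂ → ℂ} (hfg : Set.EqOn f g UDisk) (k : ℕ) :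
    Set.EqOn (deriv^[k] f) (deriv^[k] g) UDisk := by
  induction k with
  | zero => simpa using hfg
  | succ m ihm =>
    intro z hz
    rw [Function.iterate_succ_apply', Function.iterate_succ_apply']
    have hev : deriv^[m] f =ᶠ[𝓝 z] deriv^[m] g :=
      Filter.eventuallyEq_of_mem (udisk_open.mem_nhds hz) ihm
    exact hev.deriv_eq

lemma deriv_iter_intOp {h : ℂ → ℂ} (hh : DifferentiableOn ℂ h UDisk) (k : ℕ) :
    ∀ z ∈ UDisk, deriv^[k] (intOp^[k] h) z = h z := by
  induction k with
  | zero => intro z _; rfl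
  | succ m ihm =>
    intro z hz
    rw [Function.iterate_succ_apply]
    have heq : Set.EqOn (deriv (intOp^[m+1] h)) (intOp^[m] h) UDisk := by
      intro w hw
      exact (intOp_iter_hasDerivAt hh m hw).deriv
    calc deriv^[m] (deriv (intOp^[m+1] h)) z = deriv^[m] (intOp^[m] h) z :=
          eqOn_iterate_deriv heq m hz
      _ = h z := ihm z hz

def testFn (w : ℂ) : ℂ → ℂ := fun z => (Real.log 2 : ℂ) - Complex.log (1 - (starRingEnd ℂ) w * z)

lemma testFn_hasDerivAt {w : ℂ} (hw : w ∈ UDisk) {z : ℂ} (hz : z ∈ UDisk) :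
    HasDerivAt (testFn w) ((starRingEnd ℂ) w / (1 - (starRingEnd ℂ) w * z)) z := by
  set a := (starRingEnd ℂ) w with hadef
  have haabs : ‖a‖ = ‖w‖ := Complex.norm_conj w
  have hprod : ‖a * z‖ < 1 := by
    rw [norm_mul, haabs]
    have h1 := mem_udisk.mp hw
    have h2 := mem_udisk.mp hz
    have h3 := norm_nonneg w
    have h4 := norm_nonneg z
    nlinarith
  have hslit : (1 - a * z) ∈ Complex.slitPlane := by
    rw [Complex.mem_slitPlane_iff]
    left
    have hre : (1 - a * z).re = 1 - (a * z).re := by simp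
    rw [hre]
    have h2 : (a * z).re ≤ ‖a * z‖ := Complex.re_le_norm (a * z)
    linarith [hprod]
  have hu : HasDerivAt (fun z : ℂ => 1 - a * z) (-a) z := by
    simpa using ((hasDerivAt_id z).const_mul a).const_sub 1
  have hlog := (Complex.hasDerivAt_log hslit).comp z hu
  have := hlog.const_sub (Real.log 2 : ℂ)
  refine this.congr_deriv ?_
  field_simp [testFn]

lemma testFn_deriv_bound {w : ℂ} (hw : w ∈ UDisk) {z : ℂ} (hz : z ∈ UDisk) :
    (1 - ‖z‖ ^ 2) ^ (1:ℝ) * ‖deriv (testFn w) z‖ ≤ 2 := by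
  set a := (starRingEnd ℂ) w with hadef
  have hder := (testFn_hasDerivAt hw hz).deriv
  rw [hder, Real.rpow_one]
  set s : ℝ := ‖w‖ with hsdef
  set t : ℝ := ‖z‖ with htdef
  have hs1 : s < 1 := mem_udisk.mp hw
  have ht1 : t < 1 := mem_udisk.mp hz
  have hs0 : 0 ≤ s := norm_nonneg w
  have ht0 : 0 ≤ t := norm_nonneg z
  have haabs : ‖a‖ = s := Complex.norm_conj w
  have hden : 1 - s * t ≤ ‖1 - a * z‖ := by
    have h1 : ‖(1:ℂ)‖ - ‖a * z‖ ≤ ‖1 - a * z‖ :=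
      norm_sub_norm_le (1:ℂ) (a * z)
    rw [norm_one, norm_mul, haabs] at h1
    exact h1
  have hdenpos : 0 < 1 - s * t := by nlinarith
  have habs : ‖a / (1 - a * z)‖ ≤ s / (1 - s * t) := by
    rw [norm_div, haabs]
    exact div_le_div_of_nonneg_left hs0 hdenpos hden
  have ht2 : 0 ≤ 1 - t ^ 2 := by nlinarith
  calc (1 - t ^ 2) * ‖a / (1 - a * z)‖ ≤ (1 - t ^ 2) * (s / (1 - s * t)) :=
        mul_le_mul_of_nonneg_left habs ht2
    _ = ((1 - t ^ 2) * s) / (1 - s * t) := by rw [mul_div_assoc]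
    _ ≤ 2 := by
        rw [div_le_iff₀ hdenpos]
        nlinarith [sq_nonneg (1 - s * t), mul_nonneg (mul_nonneg hs0 (sq_nonneg t))
          (by linarith : (0:ℝ) ≤ 1 - s)]

lemma testFn_memBloch {w : ℂ} (hw : w ∈ UDisk) : MemBloch 1 (testFn w) :=
  ⟨fun z hz => ((testFn_hasDerivAt hw hz).differentiableAt).differentiableWithinAt,
    ⟨2, fun z hz => testFn_deriv_bound hw hz⟩⟩

lemma testFn_bNorm {w : ℂ} (hw : w ∈ UDisk) : bNorm 1 (testFn w) ≤ Real.log 2 + 2 := by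
  have h0 : testFn w 0 = (Real.log 2 : ℂ) := by
    simp [testFn]
  have h1 : ‖testFn w 0‖ = Real.log 2 := by
    rw [h0, Complex.norm_real, Real.norm_eq_abs, _root_.abs_of_nonneg log2_pos'.le]
  have h2 : bSemi 1 (testFn w) ≤ 2 := bSemi_le (fun z hz => testFn_deriv_bound hw hz)
  rw [bNorm, h1]
  linarith

lemma testFn_self {w : ℂ} (hw : w ∈ UDisk) :
    ‖testFn w w‖ = Real.log (2 / (1 - ‖w‖ ^ 2)) := by
  have h2pos : 0 < 1 - ‖w‖ ^ 2 := one_sub_sq_pos hw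
  have hcw : (starRingEnd ℂ) w * w = ((‖w‖ ^ 2 : ℝ) : ℂ) := by
    rw [mul_comm, Complex.mul_conj]
    norm_cast
    rw [Complex.sq_norm]
  have harg : (1 : ℂ) - (starRingEnd ℂ) w * w = (((1 - ‖w‖ ^ 2 : ℝ)) : ℂ) := by
    rw [hcw]
    push_cast
    ring
  have hlog : Complex.log (1 - (starRingEnd ℂ) w * w) =
      ((Real.log (1 - ‖w‖ ^ 2) : ℝ) : ℂ) := by
    rw [harg, ← Complex.ofReal_log h2pos.le]
  have : testFn w w = ((Real.log 2 - Real.log (1 - ‖w‖ ^ 2) : ℝ) : ℂ) := by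
    rw [testFn, hlog]
    push_cast
    ring
  rw [this, Complex.norm_real, Real.norm_eq_abs]
  have hlogneg : Real.log (1 - ‖w‖ ^ 2) ≤ 0 := by
    apply Real.log_nonpos h2pos.le
    nlinarith [norm_nonneg w]
  rw [_root_.abs_of_nonneg (by linarith [log2_pos'] : (0:ℝ) ≤ Real.log 2 - Real.log (1 - ‖w‖ ^ 2))]
  rw [Real.log_div (by norm_num) (ne_of_gt h2pos)]

theorem stmt11 (β : ℝ) (hβ : 0 < β) (n : ℕ) (hn : 1 ≤ n)
    (g : ℂ → ℂ) (hg : DifferentiableOn ℂ g UDisk) :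
    BoundedOp 1 β (Ig g n 0) ↔
      ∃ C : ℝ, ∀ z ∈ UDisk,
        (1 - ‖z‖ ^ 2) ^ ((n : ℝ) + β - 1) *
            Real.log (2 / (1 - ‖z‖ ^ 2)) * ‖g z‖ ≤ C := by
  obtain ⟨m, rfl⟩ : ∃ m, n = m + 1 := ⟨n - 1, (Nat.succ_pred_eq_of_pos (by omega)).symm⟩
  have hexp : ((m + 1 : ℕ) : ℝ) + β - 1 = β + (m : ℝ) := by push_cast; ring
  have hIg_eq : ∀ f : ℂ → ℂ, Ig g (m+1) 0 f = intOp^[m+1] (fun z => f z * g z) := by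
    intro f
    simp only [Ig, iteratedDeriv_zero]
  constructor
  · -- boundedness implies the growth condition
    rintro ⟨C, hCpos, hC⟩
    obtain ⟨c, hc0, hc⟩ := iter_cauchy m β hβ.le
    refine ⟨c * (C * (Real.log 2 + 2)), fun w hw => ?_⟩
    have h2pos : 0 < 1 - ‖w‖ ^ 2 := one_sub_sq_pos hw
    obtain ⟨hTmem, hTnorm⟩ := hC (testFn w) (testFn_memBloch hw)
    set H : ℂ → ℂ := fun z => testFn w z * g z with hHdef
    have htfd : DifferentiableOn ℂ (testFn w) UDisk := fun z hz =>
      ((testFn_hasDerivAt hw hz).differentiableAt).differentiableWithinAt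
    have hHdiff : DifferentiableOn ℂ H UDisk := htfd.mul hg
    have hIg : Ig g (m+1) 0 (testFn w) = intOp^[m+1] H := hIg_eq (testFn w)
    set F : ℂ → ℂ := intOp^[m] H with hFdef
    have hFdiff : DifferentiableOn ℂ F UDisk := intOp_iter_diffOn hHdiff m
    have hA0 : 0 ≤ C * (Real.log 2 + 2) :=
      mul_nonneg hCpos.le (by linarith [log2_pos'])
    -- pointwise bound on F from the Bloch norm of the image
    have hbF : ∀ z ∈ UDisk, ‖F z‖ ≤
        (C * (Real.log 2 + 2)) * (1 - ‖z‖ ^ 2) ^ (-β) := by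
      intro z hz
      obtain ⟨hTd, CT, hCT⟩ := hTmem
      have h1 := le_bSemi hCT hz
      have h2 : bSemi β (Ig g (m+1) 0 (testFn w)) ≤ C * (Real.log 2 + 2) := by
        refine le_trans (bSemi_le_bNorm β _) (hTnorm.trans ?_)
        exact mul_le_mul_of_nonneg_left (testFn_bNorm hw) hCpos.le
      have hder : deriv (Ig g (m+1) 0 (testFn w)) z = F z := by
        rw [hIg]
        exact (intOp_iter_hasDerivAt hHdiff m hz).deriv
      rw [hder] at h1
      have hzpos : 0 < 1 - ‖z‖ ^ 2 := one_sub_sq_pos hz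
      have h3 : (1 - ‖z‖ ^ 2) ^ β * ‖F z‖ ≤ C * (Real.log 2 + 2) :=
        le_trans h1 h2
      have hbpos : 0 < (1 - ‖z‖ ^ 2) ^ β := Real.rpow_pos_of_pos hzpos β
      rw [Real.rpow_neg hzpos.le, ← div_eq_mul_inv, le_div_iff₀ hbpos]
      calc ‖F z‖ * (1 - ‖z‖ ^ 2) ^ β
          = (1 - ‖z‖ ^ 2) ^ β * ‖F z‖ := by ring
        _ ≤ C * (Real.log 2 + 2) := h3
    have hmain := hc F (C * (Real.log 2 + 2)) hFdiff hA0 hbF w hw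
    have hDF : deriv^[m] F w = H w := deriv_iter_intOp hHdiff m w hw
    rw [hDF] at hmain
    have hHw : ‖H w‖ =
        Real.log (2 / (1 - ‖w‖ ^ 2)) * ‖g w‖ := by
      rw [hHdef]
      simp only [norm_mul]
      rw [testFn_self hw]
    rw [hHw] at hmain
    have hq : 0 < (1 - ‖w‖ ^ 2) ^ (β + (m:ℝ)) := Real.rpow_pos_of_pos h2pos _
    calc (1 - ‖w‖ ^ 2) ^ (((m+1:ℕ):ℝ) + β - 1) *
          Real.log (2 / (1 - ‖w‖ ^ 2)) * ‖g w‖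
        = (1 - ‖w‖ ^ 2) ^ (β + (m:ℝ)) *
          (Real.log (2 / (1 - ‖w‖ ^ 2)) * ‖g w‖) := by
          rw [hexp]; ring
      _ ≤ (1 - ‖w‖ ^ 2) ^ (β + (m:ℝ)) *
          (c * (C * (Real.log 2 + 2)) * (1 - ‖w‖ ^ 2) ^ (-(β + (m:ℝ)))) :=
          mul_le_mul_of_nonneg_left hmain hq.le
      _ = c * (C * (Real.log 2 + 2)) := by
          rw [Real.rpow_neg h2pos.le]
          field_simp
  · -- growth condition implies boundedness
    rintro ⟨C, hC⟩
    have hC0 : 0 ≤ C := by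
      have h00 := hC 0 zero_mem_udisk
      have h1 : (0:ℝ) ≤ 1 - ‖(0:ℂ)‖ ^ 2 := by simp
      have h2 : (1:ℝ) ≤ 2 / (1 - ‖(0:ℂ)‖ ^ 2) := by
        simp only [norm_zero]
        norm_num
      have h3 := Real.rpow_nonneg h1 (((m+1:ℕ):ℝ) + β - 1)
      have h4 := Real.log_nonneg h2
      have h5 := norm_nonneg (g 0)
      have h6 := mul_nonneg (mul_nonneg h3 h4) h5
      linarith
    set cB : ℝ := 1 / Real.log 2 + 1 with hcBdef
    have hcB0 : 0 ≤ cB := by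
      have := log2_pos'
      positivity
    obtain ⟨c, hc0, hc⟩ := intOp_iter_growth β hβ m
    set K : ℝ := c * (cB * C) with hKdef
    have hK0 : 0 ≤ K := mul_nonneg hc0 (mul_nonneg hcB0 hC0)
    refine ⟨max 1 K, lt_of_lt_of_le one_pos (le_max_left _ _), fun f hf => ?_⟩
    set H : ℂ → ℂ := fun z => f z * g z with hHdef
    have hHdiff : DifferentiableOn ℂ H UDisk := hf.1.mul hg
    have hIg : Ig g (m+1) 0 f = intOp^[m+1] H := hIg_eq f
    have hbnf0 : 0 ≤ bNorm 1 f := bNorm_nonneg 1 f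
    set A : ℝ := cB * bNorm 1 f * C with hAdef
    have hA0 : 0 ≤ A := mul_nonneg (mul_nonneg hcB0 hbnf0) hC0
    -- pointwise bound on H
    have hbH : ∀ w ∈ UDisk, ‖H w‖ ≤
        A * (1 - ‖w‖ ^ 2) ^ (-(β + (m:ℝ))) := by
      intro w hw
      have h2pos : 0 < 1 - ‖w‖ ^ 2 := one_sub_sq_pos hw
      set L : ℝ := Real.log (2 / (1 - ‖w‖ ^ 2)) with hLdef
      have hL0 : 0 ≤ L := le_trans log2_pos'.le (log_ge_log2 hw)
      have hgbd := hC w hw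
      rw [hexp] at hgbd
      have hfbd := bloch_growth hf hw
      have hq : 0 < (1 - ‖w‖ ^ 2) ^ (β + (m:ℝ)) :=
        Real.rpow_pos_of_pos h2pos _
      rw [Real.rpow_neg h2pos.le, ← div_eq_mul_inv, le_div_iff₀ hq]
      have step1 : ‖H w‖ = ‖f w‖ * ‖g w‖ := by
        rw [hHdef]; simp [map_mul]
      calc ‖H w‖ * (1 - ‖w‖ ^ 2) ^ (β + (m:ℝ))
          = (‖f w‖ * ‖g w‖) *
            (1 - ‖w‖ ^ 2) ^ (β + (m:ℝ)) := by rw [step1]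
        _ ≤ ((cB * bNorm 1 f * L) * ‖g w‖) *
            (1 - ‖w‖ ^ 2) ^ (β + (m:ℝ)) := by
            apply mul_le_mul_of_nonneg_right _ hq.le
            exact mul_le_mul_of_nonneg_right hfbd (norm_nonneg _)
        _ = (cB * bNorm 1 f) *
            ((1 - ‖w‖ ^ 2) ^ (β + (m:ℝ)) * L * ‖g w‖) := by ring
        _ ≤ (cB * bNorm 1 f) * C := by
            apply mul_le_mul_of_nonneg_left hgbd (mul_nonneg hcB0 hbnf0)
        _ = A := rfl
    have hmain := hc H A hHdiff hA0 hbH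
    -- derivative of the image
    have hTdiff : DifferentiableOn ℂ (Ig g (m+1) 0 f) UDisk := by
      rw [hIg]
      exact intOp_iter_diffOn hHdiff (m+1)
    have hder : ∀ z ∈ UDisk, deriv (Ig g (m+1) 0 f) z = intOp^[m] H z := by
      intro z hz
      rw [hIg]
      exact (intOp_iter_hasDerivAt hHdiff m hz).deriv
    have hpt : ∀ z ∈ UDisk,
        (1 - ‖z‖ ^ 2) ^ β * ‖deriv (Ig g (m+1) 0 f) z‖ ≤ c * A := by
      intro z hz
      have hzpos : 0 < 1 - ‖z‖ ^ 2 := one_sub_sq_pos hz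
      have h1 := hmain z hz
      rw [hder z hz]
      calc (1 - ‖z‖ ^ 2) ^ β * ‖intOp^[m] H z‖
          ≤ (1 - ‖z‖ ^ 2) ^ β * (c * A * (1 - ‖z‖ ^ 2) ^ (-β)) :=
            mul_le_mul_of_nonneg_left h1 (Real.rpow_pos_of_pos hzpos β).le
        _ = c * A := by
            rw [Real.rpow_neg hzpos.le]
            field_simp
    have hT0 : Ig g (m+1) 0 f 0 = 0 := by
      rw [hIg, Function.iterate_succ_apply']
      exact intOp_apply_zero _
    have hbs : bSemi β (Ig g (m+1) 0 f) ≤ c * A := bSemi_le hpt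
    constructor
    · exact ⟨hTdiff, ⟨c * A, hpt⟩⟩
    · have hbn : bNorm β (Ig g (m+1) 0 f) ≤ c * A := by
        rw [bNorm, hT0]
        simpa using hbs
      have heq : c * A = K * bNorm 1 f := by
        rw [hKdef, hAdef]; ring
      rw [heq] at hbn
      refine hbn.trans ?_
      exact mul_le_mul_of_nonneg_right (le_max_right 1 K) hbnf0
end
end

section
/- Let α > 0, n ≥ 1, F ∈ B^{α+n}, and g = (g₀,…,g_{n-1}) analytic on D. Define ‖g‖_* = max{‖g_k‖_k : 0 ≤ k ≤ n-1}, where ‖g_k‖_k = sup_{z∈D}(1-|z|²)^{n-k}|g_k(z)| for 1 ≤ k ≤ n-1 and ‖g₀‖₀ = sup_{z∈D}(1-|z|²)^n|g₀(z)| if α > 1, ‖g₀‖₀ = sup_{z∈D}(1-|z|²)^n log(2/(1-|z|²))|g₀(z)| if α = 1, ‖g₀‖₀ = sup_{z∈D}(1-|z|²)^{n+α-1}|g₀(z)| if 0 < α < 1. Then there exists A > 0 (depending on α, n) such that whenever ‖g‖_* < A, every analytic solution f on D of the differential equation f^{(n)} + g_{n-1} f^{(n-1)} + … + g₀ f = F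 belongs to B^α. -/
open Complex Metric Filter Topology intervalIntegral

noncomputable section

lemma cont_integrand {ρ s : ℝ} (h0 : 0 ≤ ρ) (h1 : ρ < 1) :
    ContinuousOn (fun t : ℝ => ρ * (1 - t*ρ) ^ (-s)) (Set.Icc 0 1) := by
  apply ContinuousOn.mul continuousOn_const
  apply ContinuousOn.rpow_const
  · fun_prop
  · intro t ht
    left
    have : t * ρ ≤ ρ := by nlinarith [ht.1, ht.2]
    nlinarith

lemma int_formula {ρ s : ℝ} (h0 : 0 ≤ ρ) (h1 : ρ < 1) (hs : s ≠ 1) :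
    ∫ t in (0:ℝ)..1, ρ * (1 - t*ρ) ^ (-s) = ((1-ρ) ^ (1-s) - 1)/(s-1) := by
  have key : ∀ t ∈ Set.uIcc (0:ℝ) 1,
      HasDerivAt (fun t : ℝ => (1 - t*ρ) ^ (1-s) / (s-1)) (ρ * (1 - t*ρ) ^ (-s)) t := by
    intro t ht
    rw [Set.uIcc_of_le (by norm_num)] at ht
    have hu : (0:ℝ) < 1 - t*ρ := by nlinarith [ht.1, ht.2]
    have h2 : HasDerivAt (fun t : ℝ => 1 - t*ρ) (-ρ) t := by
      simpa using ((hasDerivAt_id t).mul_const ρ).const_sub 1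
    have h3 : HasDerivAt (fun x : ℝ => x ^ (1-s)) ((1-s) * (1-t*ρ) ^ (1-s-1)) (1-t*ρ) :=
      Real.hasDerivAt_rpow_const (Or.inl hu.ne')
    have h4 := (h3.comp t h2).div_const (s-1)
    have he : (1-s) * (1-t*ρ) ^ (1-s-1) * (-ρ) / (s-1) = ρ * (1 - t*ρ) ^ (-s) := by
      have : (1:ℝ)-s-1 = -s := by ring
      rw [this]
      have hs1 : s - 1 ≠ 0 := sub_ne_zero.mpr hs
      field_simp
      ring
    rw [he] at h4
    exact h4
  have hint : IntervalIntegrable (fun t : ℝ => ρ * (1 - t*ρ) ^ (-s)) MeasureTheory.volume 0 1 :=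
    (cont_integrand h0 h1).intervalIntegrable_of_Icc (by norm_num)
  rw [integral_eq_sub_of_hasDerivAt key hint]
  rw [sub_div]
  simp

lemma int_log {ρ : ℝ} (h0 : 0 ≤ ρ) (h1 : ρ < 1) :
    ∫ t in (0:ℝ)..1, ρ * (1 - t*ρ) ^ (-1:ℝ) = -Real.log (1-ρ) := by
  have key : ∀ t ∈ Set.uIcc (0:ℝ) 1,
      HasDerivAt (fun t : ℝ => -Real.log (1 - t*ρ)) (ρ * (1 - t*ρ) ^ (-1:ℝ)) t := by
    intro t ht
    rw [Set.uIcc_of_le (by norm_num)] at ht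
    have hu : (0:ℝ) < 1 - t*ρ := by nlinarith [ht.1, ht.2]
    have h2 : HasDerivAt (fun t : ℝ => 1 - t*ρ) (-ρ) t := by
      simpa using ((hasDerivAt_id t).mul_const ρ).const_sub 1
    have h3 := ((Real.hasDerivAt_log hu.ne').comp t h2).neg
    have he : -((1 - t*ρ)⁻¹ * -ρ) = ρ * (1 - t*ρ) ^ (-1:ℝ) := by
      rw [Real.rpow_neg_one]; ring
    rw [he] at h3
    exact h3
  have hint : IntervalIntegrable (fun t : ℝ => ρ * (1 - t*ρ) ^ (-(1:ℝ))) MeasureTheory.volume 0 1 := by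
    apply ContinuousOn.intervalIntegrable_of_Icc (by norm_num)
    apply ContinuousOn.mul continuousOn_const
    apply ContinuousOn.rpow_const (by fun_prop)
    intro t ht
    left
    have : t * ρ ≤ ρ := by nlinarith [ht.1, ht.2]
    nlinarith
  rw [integral_eq_sub_of_hasDerivAt key hint]
  simp

lemma analytic_iter {f : ℂ → ℂ} (hf : DifferentiableOn ℂ f (Metric.ball 0 1)) :
    ∀ k, AnalyticOnNhd ℂ (iteratedDeriv k f) (Metric.ball 0 1) := by
  intro k
  induction k with
  | zero => simpa using hf.analyticOnNhd isOpen_ball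
  | succ k ih => rw [iteratedDeriv_succ]; exact ih.deriv

lemma ftc_growth {g : ℂ → ℂ} (hg : AnalyticOnNhd ℂ g (Metric.ball 0 1)) {z : ℂ}
    (hz : ‖z‖ < 1) {φ : ℝ → ℝ} (hφ : ContinuousOn φ (Set.Icc 0 1))
    (hb : ∀ t ∈ Set.Icc (0:ℝ) 1, ‖z‖ * ‖deriv g ((t:ℂ) * z)‖ ≤ φ t) :
    ‖g z‖ ≤ ‖g 0‖ + ∫ t in (0:ℝ)..1, φ t := by
  have hmem : ∀ t ∈ Set.Icc (0:ℝ) 1, ((t:ℂ) * z) ∈ Metric.ball (0:ℂ) 1 := by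
    intro t ht
    simp only [Metric.mem_ball, dist_zero_right, norm_mul,
      Complex.norm_real, Real.norm_eq_abs]
    calc |t| * ‖z‖ ≤ 1 * ‖z‖ := by
          apply mul_le_mul_of_nonneg_right _ (norm_nonneg z)
          rw [abs_le]; constructor <;> linarith [ht.1, ht.2]
      _ < 1 := by rwa [one_mul]
  have hd : ∀ t ∈ Set.uIcc (0:ℝ) 1,
      HasDerivAt (fun t : ℝ => g ((t:ℂ) * z)) (z • deriv g ((t:ℂ) * z)) t := by
    intro t ht
    rw [Set.uIcc_of_le (by norm_num)] at ht
    have hl : HasDerivAt (fun t : ℝ => (t:ℂ) * z) z t := by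
      simpa using (Complex.ofRealCLM.hasDerivAt (x := t)).mul_const z
    have hg' : HasDerivAt g (deriv g ((t:ℂ)*z)) ((t:ℂ)*z) :=
      ((hg _ (hmem t ht)).differentiableAt).hasDerivAt
    exact hg'.scomp t hl
  have hcont : ContinuousOn (fun t : ℝ => z • deriv g ((t:ℂ) * z)) (Set.Icc 0 1) := by
    refine ContinuousOn.const_smul (g := fun t : ℝ => deriv g ((t:ℂ) * z)) ?_ z
    apply (hg.deriv.continuousOn).comp (by fun_prop) hmem
  have hint : IntervalIntegrable (fun t : ℝ => z • deriv g ((t:ℂ) * z))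
      MeasureTheory.volume 0 1 := hcont.intervalIntegrable_of_Icc (by norm_num)
  have heq := integral_eq_sub_of_hasDerivAt hd hint
  have hφ0 : (0:ℝ) ≤ ∫ t in (0:ℝ)..1, φ t := by
    apply integral_nonneg (by norm_num)
    intro t ht
    exact le_trans (by positivity) (hb t ht)
  have hφint : IntervalIntegrable φ MeasureTheory.volume 0 1 :=
    hφ.intervalIntegrable_of_Icc (by norm_num)
  have hnorm : ‖g z - g 0‖ ≤ ∫ t in (0:ℝ)..1, φ t := by
    have h1 : g z - g 0 = ∫ t in (0:ℝ)..1, z • deriv g ((t:ℂ) * z) := by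
      rw [heq]; norm_num
    rw [h1]
    calc ‖∫ t in (0:ℝ)..1, z • deriv g ((t:ℂ) * z)‖ ≤ |∫ t in (0:ℝ)..1, φ t| := by
          apply norm_integral_le_abs_of_norm_le _ hφint
          filter_upwards [MeasureTheory.ae_restrict_mem measurableSet_uIoc] with t ht
          have ht' : t ∈ Set.Icc (0:ℝ) 1 := by
            rw [Set.uIoc_of_le (by norm_num)] at ht
            exact Set.Ioc_subset_Icc_self ht
          calc ‖z • deriv g ((t:ℂ) * z)‖ = ‖z‖ * ‖deriv g ((t:ℂ)*z)‖ := by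
                simp [norm_smul]
            _ ≤ φ t := hb t ht'
      _ = ∫ t in (0:ℝ)..1, φ t := abs_of_nonneg hφ0
  calc ‖g z‖ = ‖g 0 + (g z - g 0)‖ := by ring_nf
    _ ≤ ‖g 0‖ + ‖g z - g 0‖ := norm_add_le _ _
    _ ≤ ‖g 0‖ + ∫ t in (0:ℝ)..1, φ t := by linarith

-- common setup for the two growth lemmas
section
variable {g : ℂ → ℂ} {s M : ℝ} {z : ℂ}

lemma growth_aux (hg : AnalyticOnNhd ℂ g (Metric.ball 0 1)) (hs : 0 < s) (hM : 0 ≤ M)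
    (hz : ‖z‖ < 1)
    (hb : ∀ w : ℂ, ‖w‖ ≤ ‖z‖ →
      ‖deriv g w‖ ≤ M * (1 - ‖w‖ ^ 2) ^ (-s)) :
    ‖g z‖ ≤ ‖g 0‖ +
      ∫ t in (0:ℝ)..1, M * (‖z‖ * (1 - t * ‖z‖) ^ (-s)) := by
  set ρ := ‖z‖ with hρ
  have hρ0 : 0 ≤ ρ := norm_nonneg z
  apply ftc_growth hg hz
  · apply ContinuousOn.mul continuousOn_const
    apply ContinuousOn.mul continuousOn_const
    apply ContinuousOn.rpow_const (by fun_prop)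
    intro t ht
    left
    have : t * ρ ≤ ρ := by nlinarith [ht.1, ht.2]
    nlinarith
  · intro t ht
    have habs : ‖(t:ℂ) * z‖ = t * ρ := by
      rw [norm_mul, Complex.norm_real, Real.norm_of_nonneg ht.1]
    have hle : ‖(t:ℂ) * z‖ ≤ ρ := by
      rw [habs]; nlinarith [ht.1, ht.2]
    have h1 : ‖deriv g ((t:ℂ)*z)‖ ≤ M * (1 - (t*ρ) ^ 2) ^ (-s) := by
      have := hb _ hle
      rwa [habs] at this
    have h2 : (1 - (t*ρ)^2 : ℝ) ^ (-s) ≤ (1 - t*ρ) ^ (-s) := by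
      have htρ : 0 ≤ t * ρ := mul_nonneg ht.1 hρ0
      have htρ1 : t * ρ ≤ 1 := by nlinarith [ht.2, hρ0, hz.le]
      apply Real.rpow_le_rpow_of_nonpos _ _ (by linarith)
      · nlinarith
      · nlinarith
    calc ρ * ‖deriv g ((t:ℂ)*z)‖ ≤ ρ * (M * (1 - (t*ρ)^2) ^ (-s)) :=
          mul_le_mul_of_nonneg_left h1 hρ0
      _ ≤ M * (ρ * (1 - t*ρ) ^ (-s)) := by
          rw [show ρ * (M * (1 - (t*ρ)^2) ^ (-s)) = M * (ρ * (1 - (t*ρ)^2) ^ (-s)) by ring]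
          apply mul_le_mul_of_nonneg_left _ hM
          exact mul_le_mul_of_nonneg_left h2 hρ0

lemma growth_ne (hg : AnalyticOnNhd ℂ g (Metric.ball 0 1)) (hs : 0 < s) (hsne : s ≠ 1)
    (hM : 0 ≤ M) (hz : ‖z‖ < 1)
    (hb : ∀ w : ℂ, ‖w‖ ≤ ‖z‖ →
      ‖deriv g w‖ ≤ M * (1 - ‖w‖ ^ 2) ^ (-s)) :
    ‖g z‖ ≤ ‖g 0‖ +
      M * (((1 - ‖z‖) ^ (1 - s) - 1) / (s - 1)) := by
  have := growth_aux hg hs hM hz hb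
  rwa [intervalIntegral.integral_const_mul, int_formula (norm_nonneg z) hz hsne] at this

lemma growth_log (hg : AnalyticOnNhd ℂ g (Metric.ball 0 1)) (hM : 0 ≤ M)
    (hz : ‖z‖ < 1)
    (hb : ∀ w : ℂ, ‖w‖ ≤ ‖z‖ →
      ‖deriv g w‖ ≤ M * (1 - ‖w‖ ^ 2) ^ (-1:ℝ)) :
    ‖g z‖ ≤ ‖g 0‖ + M * (-Real.log (1 - ‖z‖)) := by
  have := growth_aux hg one_pos hM hz hb
  rwa [intervalIntegral.integral_const_mul, int_log (norm_nonneg z) hz] at this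

end

section
variable {h : ℂ → ℂ} {s M : ℝ} {z : ℂ}

-- translate a weighted bound to the form needed by growth lemmas
lemma hb_translate (hw1 : ∀ w : ℂ, ‖w‖ ≤ ‖z‖ →
      (1 - ‖w‖ ^ 2) ^ s * ‖deriv h w‖ ≤ M) (hz : ‖z‖ < 1) :
    ∀ w : ℂ, ‖w‖ ≤ ‖z‖ →
      ‖deriv h w‖ ≤ M * (1 - ‖w‖ ^ 2) ^ (-s) := by
  intro w hw
  have hpos : (0:ℝ) < 1 - ‖w‖ ^ 2 := by
    have h1 : ‖w‖ < 1 := lt_of_le_of_lt hw hz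
    nlinarith [norm_nonneg w]
  have hrp : (0:ℝ) < (1 - ‖w‖ ^ 2) ^ s := Real.rpow_pos_of_pos hpos s
  rw [Real.rpow_neg hpos.le, ← div_eq_mul_inv, le_div_iff₀ hrp]
  calc ‖deriv h w‖ * (1 - ‖w‖ ^ 2) ^ s
      = (1 - ‖w‖ ^ 2) ^ s * ‖deriv h w‖ := by ring
    _ ≤ M := hw1 w hw

lemma step_bound (hh : AnalyticOnNhd ℂ h (Metric.ball 0 1)) (hs : 1 < s) (hM : 0 ≤ M)
    (hz : ‖z‖ < 1)
    (hb : ∀ w : ℂ, ‖w‖ ≤ ‖z‖ →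
      (1 - ‖w‖ ^ 2) ^ s * ‖deriv h w‖ ≤ M) :
    (1 - ‖z‖ ^ 2) ^ (s - 1) * ‖h z‖ ≤
      ‖h 0‖ + (2 ^ s / (s - 1)) * M := by
  set ρ := ‖z‖ with hρ
  have hρ0 : 0 ≤ ρ := norm_nonneg z
  have hpos : (0:ℝ) < 1 - ρ ^ 2 := by nlinarith
  have hpos' : (0:ℝ) < 1 - ρ := by linarith
  have key := growth_ne hh (by linarith) (by linarith) hM hz (hb_translate hb hz)
  have hw1 : (1 - ρ ^ 2) ^ (s-1) ≤ 1 :=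
    Real.rpow_le_one hpos.le (by nlinarith) (by linarith)
  have hw2 : (1 - ρ ^ 2) ^ (s-1) * ((1 - ρ) ^ (1 - s) / (s - 1)) ≤ 2 ^ s / (s - 1) := by
    have e1 : (1 - ρ^2 : ℝ) ^ (s-1) ≤ (2 * (1 - ρ)) ^ (s-1) :=
      Real.rpow_le_rpow hpos.le (by nlinarith) (by linarith)
    have e2 : ((2:ℝ) * (1 - ρ)) ^ (s-1) = 2 ^ (s-1) * (1-ρ) ^ (s-1) :=
      Real.mul_rpow (by norm_num) hpos'.le
    have e3 : (1-ρ) ^ (s-1) * (1-ρ) ^ (1-s) = 1 := by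
      rw [← Real.rpow_add hpos']; norm_num
    have e4 : (2:ℝ) ^ (s-1) ≤ 2 ^ s :=
      Real.rpow_le_rpow_of_exponent_le (by norm_num) (by linarith)
    have h1s : (0:ℝ) < (1-ρ) ^ (1-s) := Real.rpow_pos_of_pos hpos' _
    have hcore : (1 - ρ ^ 2) ^ (s-1) * ((1 - ρ) ^ (1 - s)) ≤ 2 ^ s := by
      calc (1 - ρ ^ 2) ^ (s-1) * ((1 - ρ) ^ (1 - s))
          ≤ (2 ^ (s-1) * (1-ρ) ^ (s-1)) * ((1 - ρ) ^ (1 - s)) := by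
            rw [← e2]
            exact mul_le_mul_of_nonneg_right e1 h1s.le
        _ = 2 ^ (s-1) * ((1-ρ) ^ (s-1) * (1 - ρ) ^ (1 - s)) := by ring
        _ = 2 ^ (s-1) := by rw [e3]; ring
        _ ≤ 2 ^ s := e4
    rw [← mul_div_assoc]
    gcongr
  have hws : (0:ℝ) ≤ (1 - ρ^2) ^ (s-1) := (Real.rpow_pos_of_pos hpos _).le
  calc (1 - ρ^2) ^ (s-1) * ‖h z‖
      ≤ (1 - ρ^2) ^ (s-1) * (‖h 0‖ + M * (((1 - ρ) ^ (1-s) - 1)/(s-1))) :=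
        mul_le_mul_of_nonneg_left key hws
    _ = (1 - ρ^2) ^ (s-1) * ‖h 0‖
        + M * ((1 - ρ^2) ^ (s-1) * (((1 - ρ) ^ (1-s) - 1)/(s-1))) := by ring
    _ ≤ ‖h 0‖ + (2 ^ s / (s-1)) * M := by
        have b1 : (1 - ρ^2) ^ (s-1) * ‖h 0‖ ≤ ‖h 0‖ := by
          calc (1 - ρ^2) ^ (s-1) * ‖h 0‖ ≤ 1 * ‖h 0‖ :=
                mul_le_mul_of_nonneg_right hw1 (norm_nonneg _)
            _ = ‖h 0‖ := one_mul _
        have b2 : (1 - ρ^2) ^ (s-1) * (((1 - ρ) ^ (1-s) - 1)/(s-1)) ≤ 2 ^ s / (s-1) := by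
          calc (1 - ρ^2) ^ (s-1) * (((1 - ρ) ^ (1-s) - 1)/(s-1))
              ≤ (1 - ρ^2) ^ (s-1) * ((1 - ρ) ^ (1-s)/(s-1)) := by
                apply mul_le_mul_of_nonneg_left _ hws
                apply div_le_div_of_nonneg_right ?_ (by linarith)
                linarith
            _ ≤ 2 ^ s / (s-1) := hw2
        nlinarith [mul_le_mul_of_nonneg_left b2 hM]

lemma val_lt (hh : AnalyticOnNhd ℂ h (Metric.ball 0 1)) (hs0 : 0 < s) (hs : s < 1) (hM : 0 ≤ M)
    (hz : ‖z‖ < 1)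
    (hb : ∀ w : ℂ, ‖w‖ ≤ ‖z‖ →
      (1 - ‖w‖ ^ 2) ^ s * ‖deriv h w‖ ≤ M) :
    ‖h z‖ ≤ ‖h 0‖ + M / (1 - s) := by
  have key := growth_ne hh hs0 hs.ne hM hz (hb_translate hb hz)
  have hpos' : (0:ℝ) < 1 - ‖z‖ := by linarith
  have ha0 : (0:ℝ) ≤ (1 - ‖z‖) ^ (1-s) := Real.rpow_nonneg hpos'.le _
  have h2 : (((1 - ‖z‖) ^ (1-s) - 1)/(s-1)) ≤ 1/(1-s) := by
    have e : (((1 - ‖z‖) ^ (1-s) - 1)/(s-1)) = (1 - (1 - ‖z‖) ^ (1-s))/(1-s) := by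
      rw [← neg_div_neg_eq]
      ring_nf
    rw [e]
    gcongr
    · linarith
  calc ‖h z‖ ≤ ‖h 0‖ + M * (((1 - ‖z‖) ^ (1-s) - 1)/(s-1)) := key
    _ ≤ ‖h 0‖ + M * (1/(1-s)) := by
        have := mul_le_mul_of_nonneg_left h2 hM
        linarith
    _ = ‖h 0‖ + M/(1-s) := by ring

lemma val_log (hh : AnalyticOnNhd ℂ h (Metric.ball 0 1)) (hM : 0 ≤ M)
    (hz : ‖z‖ < 1)
    (hb : ∀ w : ℂ, ‖w‖ ≤ ‖z‖ →
      (1 - ‖w‖ ^ 2) ^ (1:ℝ) * ‖deriv h w‖ ≤ M) :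
    ‖h z‖ ≤ ‖h 0‖ + M * Real.log (2/(1 - ‖z‖ ^ 2)) := by
  have key := growth_log hh hM hz (hb_translate hb hz)
  have hρ0 := norm_nonneg z
  have hpos : (0:ℝ) < 1 - ‖z‖ ^ 2 := by nlinarith
  have hpos' : (0:ℝ) < 1 - ‖z‖ := by linarith
  have h2 : -Real.log (1 - ‖z‖) ≤ Real.log (2/(1 - ‖z‖ ^ 2)) := by
    rw [← Real.log_inv]
    apply Real.log_le_log (by positivity)
    rw [inv_eq_one_div, div_le_div_iff₀ hpos' hpos]
    nlinarith [sq_nonneg (1 - ‖z‖)]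
  calc ‖h z‖ ≤ ‖h 0‖ + M * (-Real.log (1 - ‖z‖)) := key
    _ ≤ ‖h 0‖ + M * Real.log (2/(1 - ‖z‖ ^ 2)) := by
        have := mul_le_mul_of_nonneg_left h2 hM
        linarith

end

set_option maxHeartbeats 2000000 in
theorem stmt19 (α : ℝ) (hα : 0 < α) (n : ℕ) (hn : 1 ≤ n) :
    ∃ A > 0, ∀ g : Fin n → ℂ → ℂ, (∀ k, DifferentiableOn ℂ (g k) UDisk) →
      (∀ k : Fin n, 1 ≤ (k : ℕ) → ∀ z ∈ UDisk,
        (1 - ‖z‖ ^ 2) ^ ((n : ℝ) - (k : ℕ)) * ‖g k z‖ ≤ A) →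
      (∀ z ∈ UDisk,
        (if 1 < α then
            (1 - ‖z‖ ^ 2) ^ (n : ℝ) * ‖g ⟨0, hn⟩ z‖
          else if α = 1 then
            (1 - ‖z‖ ^ 2) ^ (n : ℝ) * Real.log (2 / (1 - ‖z‖ ^ 2)) *
              ‖g ⟨0, hn⟩ z‖
          else
            (1 - ‖z‖ ^ 2) ^ ((n : ℝ) + α - 1) * ‖g ⟨0, hn⟩ z‖) ≤ A) →
      ∀ F f : ℂ → ℂ, MemBloch (α + n) F → DifferentiableOn ℂ f UDisk →
        (∀ z ∈ UDisk, iteratedDeriv n f z + ∑ k : Fin n, g k z * iteratedDeriv k f z = F z) →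
        MemBloch α f := by
  have hn1 : (1:ℝ) ≤ (n:ℝ) := by exact_mod_cast hn
  -- the constant cstar
  set c0 : ℝ := if 1 < α then 2^α/(α-1) else if α = 1 then 1/Real.log 2 else 1/(1-α) with hc0def
  have hc00 : 0 ≤ c0 := by
    rw [hc0def]; split_ifs with h1 h2
    · apply div_nonneg (by positivity) (by linarith)
    · have := Real.log_pos (by norm_num : (1:ℝ) < 2)
      positivity
    · have : α < 1 := lt_of_le_of_ne (not_lt.1 h1) h2
      apply div_nonneg (by norm_num) (by linarith)
  set cstar : ℝ := max (max ((2:ℝ)^(α+n)/α) c0) 1 with hcs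
  have hcs1 : (1:ℝ) ≤ cstar := le_max_right _ _
  have hcs0 : (0:ℝ) < cstar := lt_of_lt_of_le one_pos hcs1
  have hcsn : ∀ d : ℕ, (1:ℝ) ≤ cstar^d := fun d => by calc (1:ℝ) = 1^d := (one_pow d).symm
    _ ≤ cstar^d := pow_le_pow_left₀ (by norm_num) hcs1 d
  set K : ℝ := ((n:ℝ)+1) * cstar^(n+1) with hK
  have hKpos : (0:ℝ) < K := by
    rw [hK]; positivity
  refine ⟨1/(2*K), by positivity, ?_⟩
  intro g hgd hgk hg0 F f hF hf hode
  set A : ℝ := 1/(2*K) with hA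
  have hApos : (0:ℝ) < A := by rw [hA]; positivity
  have hAK : A * K = 1/2 := by rw [hA]; field_simp
  have hcb : ∀ (r : ℝ) (z : ℂ), z ∈ Metric.closedBall (0:ℂ) r ↔ ‖z‖ ≤ r := by
    intro r z
    rw [Metric.mem_closedBall, dist_zero_right]
  have hUmem : ∀ z : ℂ, z ∈ UDisk ↔ ‖z‖ < 1 := by
    intro z
    rw [UDisk, Metric.mem_ball, dist_zero_right]
  have hfa : ∀ k, AnalyticOnNhd ℂ (iteratedDeriv k f) (Metric.ball 0 1) := analytic_iter hf
  have hfA : AnalyticOnNhd ℂ f (Metric.ball 0 1) := by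
    have := hfa 0; rwa [iteratedDeriv_zero] at this
  have hFa : AnalyticOnNhd ℂ F (Metric.ball 0 1) := hF.1.analyticOnNhd isOpen_ball
  obtain ⟨CF, hCF⟩ := hF.2
  set CF' : ℝ := max CF 0 with hCF'def
  have hCF'0 : (0:ℝ) ≤ CF' := le_max_right _ _
  set u : ℕ → ℂ → ℝ :=
    fun k z => (1 - ‖z‖ ^ 2) ^ (α + k - 1) * ‖iteratedDeriv k f z‖ with hu
  set m : ℝ → ℕ → ℝ := fun r k => sSup (u k '' Metric.closedBall 0 r) with hm
  have hpos12 : ∀ z : ℂ, ‖z‖ < 1 → (0:ℝ) < 1 - ‖z‖ ^ 2 := by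
    intro z hz
    nlinarith [norm_nonneg z]
  have hbdd : ∀ r : ℝ, 0 ≤ r → r < 1 → ∀ k, BddAbove (u k '' Metric.closedBall 0 r) := by
    intro r hr0 hr1 k
    apply IsCompact.bddAbove_image (isCompact_closedBall 0 r)
    apply ContinuousOn.mul
    · apply ContinuousOn.rpow_const
        ((continuous_const.sub (continuous_norm.pow 2)).continuousOn)
      intro z hz
      exact Or.inl (ne_of_gt (hpos12 z (lt_of_le_of_lt ((hcb r z).1 hz) hr1)))
    · exact continuous_norm.comp_continuousOn
        (((hfa k).continuousOn).mono (Metric.closedBall_subset_ball hr1))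
  have hle : ∀ r : ℝ, 0 ≤ r → r < 1 → ∀ k, ∀ z : ℂ, ‖z‖ ≤ r → u k z ≤ m r k := by
    intro r h0 h1 k z hz
    exact le_csSup (hbdd r h0 h1 k) ⟨z, (hcb r z).2 hz, rfl⟩
  have hu0 : ∀ k (z : ℂ), ‖z‖ < 1 → 0 ≤ u k z := by
    intro k z hz
    exact mul_nonneg (Real.rpow_nonneg (hpos12 z hz).le _) (norm_nonneg _)
  have hm0 : ∀ r : ℝ, 0 ≤ r → r < 1 → ∀ k, 0 ≤ m r k := by
    intro r h0 h1 k
    refine le_trans (hu0 k 0 (by simp)) (hle r h0 h1 k 0 (by simpa using h0))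
  have hsup_le : ∀ r : ℝ, 0 ≤ r → ∀ k (B : ℝ), (∀ z : ℂ, ‖z‖ ≤ r → u k z ≤ B) →
      m r k ≤ B := by
    intro r h0 k B hB
    apply csSup_le (Set.Nonempty.image _ ⟨0, Metric.mem_closedBall_self h0⟩)
    rintro b ⟨z, hz, rfl⟩
    exact hB z ((hcb r z).1 hz)
  -- one step of the derivative chain
  have hstep : ∀ r : ℝ, 0 ≤ r → r < 1 → ∀ k : ℕ, 1 ≤ k → k ≤ n → ∀ z : ℂ,
      ‖z‖ ≤ r →
      u k z ≤ ‖iteratedDeriv k f 0‖ + cstar * m r (k+1) := by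
    intro r h0 h1 k hk1 hkn z hz
    have hz1 : ‖z‖ < 1 := lt_of_le_of_lt hz h1
    have hk1' : (1:ℝ) ≤ (k:ℝ) := by exact_mod_cast hk1
    have hkn' : (k:ℝ) ≤ (n:ℝ) := by exact_mod_cast hkn
    have hs : 1 < α + (k:ℝ) := by linarith
    have hMk := hm0 r h0 h1 (k+1)
    have hb : ∀ w : ℂ, ‖w‖ ≤ ‖z‖ →
        (1 - ‖w‖ ^ 2) ^ (α + (k:ℝ)) * ‖deriv (iteratedDeriv k f) w‖
          ≤ m r (k+1) := by
      intro w hw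
      have h2 := hle r h0 h1 (k+1) w (le_trans hw hz)
      rw [← iteratedDeriv_succ]
      convert h2 using 2
      push_cast
      ring
    have key := step_bound (hfa k) hs hMk hz1 hb
    have hc : (2:ℝ)^(α + (k:ℝ))/(α + (k:ℝ) - 1) ≤ cstar := by
      have e1 : (2:ℝ)^(α + (k:ℝ)) ≤ 2^(α + (n:ℝ)) :=
        Real.rpow_le_rpow_of_exponent_le (by norm_num) (by linarith)
      have e2 : (2:ℝ)^(α + (k:ℝ))/(α + (k:ℝ) - 1) ≤ 2^(α + (n:ℝ))/α := by
        apply div_le_div₀ (by positivity) e1 hα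
        linarith
      calc (2:ℝ)^(α + (k:ℝ))/(α + (k:ℝ) - 1) ≤ 2^(α + (n:ℝ))/α := e2
        _ ≤ cstar := le_trans (le_max_left _ _) (le_max_left _ _)
    calc u k z = (1 - ‖z‖ ^ 2) ^ (α + (k:ℝ) - 1) *
          ‖iteratedDeriv k f z‖ := rfl
      _ ≤ ‖iteratedDeriv k f 0‖ + (2^(α + (k:ℝ))/(α + (k:ℝ) - 1)) * m r (k+1) := key
      _ ≤ ‖iteratedDeriv k f 0‖ + cstar * m r (k+1) := by
          have := mul_le_mul_of_nonneg_right hc hMk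
          linarith
  -- sum of derivative norms at 0
  set S : ℝ := ∑ j ∈ Finset.range (n+1), ‖iteratedDeriv j f 0‖ with hSdef
  have hS0 : 0 ≤ S := Finset.sum_nonneg (fun _ _ => norm_nonneg _)
  have haS : ∀ k : ℕ, k ≤ n → ‖iteratedDeriv k f 0‖ ≤ S := by
    intro k hk
    rw [hSdef]
    refine Finset.single_le_sum (f := fun j => ‖iteratedDeriv j f 0‖)
      (fun _ _ => norm_nonneg _) ?_
    exact Finset.mem_range.2 (by omega)
  -- unrolled chain
  have hchain : ∀ r : ℝ, 0 ≤ r → r < 1 → ∀ d k : ℕ, 1 ≤ k → k + d = n →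
      m r k ≤ S * ((d:ℝ)+1) * cstar^d + cstar^d * m r n := by
    intro r h0 h1 d
    induction d with
    | zero =>
      intro k hk1 hkn
      have hkn' : k = n := by omega
      subst hkn'
      simp only [Nat.cast_zero, pow_zero]
      have := hm0 r h0 h1 k
      nlinarith
    | succ d ih =>
      intro k hk1 hkn
      push_cast
      have hmk : m r k ≤ ‖iteratedDeriv k f 0‖ + cstar * m r (k+1) :=
        hsup_le r h0 k (‖iteratedDeriv k f 0‖ + cstar * m r (k+1))
          (fun z hz => hstep r h0 h1 k hk1 (by omega) z hz)
      have hih := ih (k+1) (by omega) (by omega)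
      have hcp : (0:ℝ) ≤ cstar^d := by positivity
      have hmn := hm0 r h0 h1 n
      have hone : (1:ℝ) ≤ cstar^(d+1) := hcsn (d+1)
      have hak := haS k (by omega)
      have hmul := mul_le_mul_of_nonneg_left hih hcs0.le
      have hSd : S ≤ S * cstar^(d+1) := le_mul_of_one_le_right hS0 hone
      have hps : cstar^(d+1) = cstar^d * cstar := pow_succ cstar d
      calc m r k ≤ ‖iteratedDeriv k f 0‖ + cstar * m r (k+1) := hmk
        _ ≤ S + cstar * (S * ((d:ℝ)+1) * cstar^d + cstar^d * m r n) := by linarith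
        _ = S + S * ((d:ℝ)+1) * cstar^(d+1) + cstar^(d+1) * m r n := by rw [hps]; ring
        _ ≤ S * cstar^(d+1) + S * ((d:ℝ)+1) * cstar^(d+1) + cstar^(d+1) * m r n := by linarith
        _ = S * (((d:ℕ)+1:ℝ)+1) * cstar^(d+1) + cstar^(d+1) * m r n := by push_cast; ring
  set P : ℝ := S * ((n:ℝ)+1) * cstar^n with hPdef
  have hP0 : 0 ≤ P := by
    rw [hPdef]; positivity
  have hchain' : ∀ r : ℝ, 0 ≤ r → r < 1 → ∀ k : ℕ, 1 ≤ k → k ≤ n →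
      m r k ≤ P + cstar^n * m r n := by
    intro r h0 h1 k hk1 hkn
    have h := hchain r h0 h1 (n - k) k hk1 (by omega)
    have hd : n - k ≤ n := by omega
    have hcd : cstar^(n-k) ≤ cstar^n := pow_le_pow_right₀ hcs1 hd
    have hd1 : ((n-k:ℕ):ℝ) + 1 ≤ (n:ℝ) + 1 := by
      have : ((n-k:ℕ):ℝ) ≤ (n:ℝ) := by exact_mod_cast hd
      linarith
    have hmn := hm0 r h0 h1 n
    have hcnk : (0:ℝ) < cstar^(n-k) := by positivity
    rw [hPdef]
    calc m r k ≤ S * (((n-k:ℕ):ℝ)+1) * cstar^(n-k) + cstar^(n-k) * m r n := h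
      _ ≤ S * ((n:ℝ)+1) * cstar^n + cstar^n * m r n := by
          have b1 : S * (((n-k:ℕ):ℝ)+1) * cstar^(n-k) ≤ S * ((n:ℝ)+1) * cstar^n := by
            apply mul_le_mul
            · apply mul_le_mul_of_nonneg_left hd1 hS0
            · exact hcd
            · positivity
            · positivity
          have b2 : cstar^(n-k) * m r n ≤ cstar^n * m r n :=
            mul_le_mul_of_nonneg_right hcd hmn
          linarith
  -- bound on the weighted F term
  set XF : ℝ := ‖F 0‖ + (2^(α+(n:ℝ))/(α+(n:ℝ)-1)) * CF' with hXFdef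
  have hFbound : ∀ z : ℂ, ‖z‖ < 1 →
      (1 - ‖z‖ ^ 2) ^ (α+(n:ℝ)-1) * ‖F z‖ ≤ XF := by
    intro z hz
    rw [hXFdef]
    apply step_bound hFa (by linarith : 1 < α + (n:ℝ)) hCF'0 hz
    intro w hw
    have hwU : w ∈ UDisk := (hUmem w).2 (lt_of_le_of_lt hw hz)
    exact le_trans (hCF w hwU) (le_max_left _ _)
  have hb1 : ∀ r : ℝ, 0 ≤ r → r < 1 → ∀ z : ℂ, ‖z‖ ≤ r →
      ∀ w : ℂ, ‖w‖ ≤ ‖z‖ →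
      (1 - ‖w‖ ^ 2) ^ α * ‖deriv f w‖ ≤ m r 1 := by
    intro r h0 h1 z hz w hw
    have h2 := hle r h0 h1 1 w (le_trans hw hz)
    simp only [hu] at h2
    have he : α + ((1:ℕ):ℝ) - 1 = α := by push_cast; ring
    rw [he, iteratedDeriv_one] at h2
    exact h2
  have hc0le : c0 ≤ cstar := le_trans (le_max_right _ _) (le_max_left _ _)
  have hterm0 : ∀ r : ℝ, 0 ≤ r → r < 1 → ∀ z : ℂ, ‖z‖ ≤ r →
      (1 - ‖z‖ ^ 2) ^ (α+(n:ℝ)-1) *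
        (‖g ⟨0, hn⟩ z‖ * ‖f z‖)
        ≤ A * (cstar * (‖f 0‖ + m r 1)) := by
    intro r h0 h1 z hz
    have hz1 : ‖z‖ < 1 := lt_of_le_of_lt hz h1
    have hzU : z ∈ UDisk := (hUmem z).2 hz1
    have hp := hpos12 z hz1
    have hm1 := hm0 r h0 h1 1
    have hG := hg0 z hzU
    have habs0 := norm_nonneg (g ⟨0, hn⟩ z)
    have hf0 := norm_nonneg (f 0)
    have hfin : ∀ D : ℝ, 0 ≤ D → D ≤ cstar →
        A * (‖f 0‖ + D * m r 1) ≤ A * (cstar * (‖f 0‖ + m r 1)) := by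
      intro D hD0 hDc
      apply mul_le_mul_of_nonneg_left _ hApos.le
      have b1 : ‖f 0‖ ≤ cstar * ‖f 0‖ :=
        le_mul_of_one_le_left hf0 hcs1
      have b2 : D * m r 1 ≤ cstar * m r 1 := mul_le_mul_of_nonneg_right hDc hm1
      calc ‖f 0‖ + D * m r 1 ≤ cstar * ‖f 0‖ + cstar * m r 1 := by
            linarith
        _ = cstar * (‖f 0‖ + m r 1) := by ring
    rcases lt_trichotomy α 1 with hα1 | hα1 | hα1
    · -- case 0 < α < 1
      rw [if_neg (by linarith), if_neg (by linarith)] at hG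
      have hc0v : c0 = 1/(1-α) := by
        rw [hc0def, if_neg (by linarith), if_neg (by linarith)]
      have hval := val_lt hfA hα hα1 hm1 hz1 (hb1 r h0 h1 z hz)
      have he : α + (n:ℝ) - 1 = (n:ℝ) + α - 1 := by ring
      rw [he]
      have hfz0 := norm_nonneg (f z)
      calc (1 - ‖z‖ ^ 2) ^ ((n:ℝ)+α-1) *
            (‖g ⟨0, hn⟩ z‖ * ‖f z‖)
          = ((1 - ‖z‖ ^ 2) ^ ((n:ℝ)+α-1) * ‖g ⟨0, hn⟩ z‖) *
            ‖f z‖ := by ring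
        _ ≤ A * (‖f 0‖ + m r 1 / (1 - α)) := by
            apply mul_le_mul hG hval hfz0 hApos.le
        _ = A * (‖f 0‖ + (1/(1-α)) * m r 1) := by ring
        _ ≤ A * (cstar * (‖f 0‖ + m r 1)) := by
            apply hfin
            · exact div_nonneg (by norm_num) (by linarith)
            · rw [← hc0v]; exact hc0le
    · -- case α = 1
      subst hα1
      rw [if_neg (by norm_num), if_pos rfl] at hG
      have hc0v : c0 = 1/Real.log 2 := by
        rw [hc0def, if_neg (by norm_num), if_pos rfl]
      have hlog2 : (0:ℝ) < Real.log 2 := Real.log_pos (by norm_num)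
      set L : ℝ := Real.log (2 / (1 - ‖z‖ ^ 2)) with hLdef
      have hL2 : Real.log 2 ≤ L := by
        rw [hLdef]
        apply Real.log_le_log (by norm_num)
        rw [le_div_iff₀ hp]
        nlinarith [sq_nonneg (‖z‖)]
      have hL0 : (0:ℝ) < L := lt_of_lt_of_le hlog2 hL2
      have hb1' : ∀ w : ℂ, ‖w‖ ≤ ‖z‖ →
          (1 - ‖w‖ ^ 2) ^ (1:ℝ) * ‖deriv f w‖ ≤ m r 1 :=
        hb1 r h0 h1 z hz
      have hval := val_log hfA hm1 hz1 hb1'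
      rw [← hLdef] at hval
      set G : ℝ := (1 - ‖z‖ ^ 2) ^ ((n:ℝ)) * ‖g ⟨0, hn⟩ z‖ with hGdef
      have hG0 : 0 ≤ G := by
        rw [hGdef]
        exact mul_nonneg (Real.rpow_nonneg hp.le _) habs0
      have hG' : G * L ≤ A := by
        rw [hGdef]
        calc (1 - ‖z‖ ^ 2) ^ ((n:ℝ)) * ‖g ⟨0, hn⟩ z‖ * L
            = (1 - ‖z‖ ^ 2) ^ ((n:ℝ)) * L * ‖g ⟨0, hn⟩ z‖ := by ring
          _ ≤ A := hG
      have hGA : G ≤ A / Real.log 2 := by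
        rw [le_div_iff₀ hlog2]
        calc G * Real.log 2 ≤ G * L := mul_le_mul_of_nonneg_left hL2 hG0
          _ ≤ A := hG'
      have he : (1:ℝ) + (n:ℝ) - 1 = (n:ℝ) := by ring
      rw [he]
      have hfz0 := norm_nonneg (f z)
      calc (1 - ‖z‖ ^ 2) ^ ((n:ℝ)) *
            (‖g ⟨0, hn⟩ z‖ * ‖f z‖)
          = G * ‖f z‖ := by rw [hGdef]; ring
        _ ≤ G * (‖f 0‖ + m r 1 * L) := by
            apply mul_le_mul_of_nonneg_left hval hG0
        _ = G * ‖f 0‖ + (G * L) * m r 1 := by ring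
        _ ≤ (A / Real.log 2) * ‖f 0‖ + A * m r 1 := by
            have b1 : G * ‖f 0‖ ≤ (A / Real.log 2) * ‖f 0‖ :=
              mul_le_mul_of_nonneg_right hGA hf0
            have b2 : (G * L) * m r 1 ≤ A * m r 1 := mul_le_mul_of_nonneg_right hG' hm1
            linarith
        _ ≤ A * (cstar * (‖f 0‖ + m r 1)) := by
            have hcl : 1/Real.log 2 ≤ cstar := by rw [← hc0v]; exact hc0le
            have hb1'' : (1/Real.log 2) * ‖f 0‖ ≤ cstar * ‖f 0‖ :=
              mul_le_mul_of_nonneg_right hcl hf0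
            have hb2'' : m r 1 ≤ cstar * m r 1 := le_mul_of_one_le_left hm1 hcs1
            have hmul' := mul_le_mul_of_nonneg_left (add_le_add hb1'' hb2'') hApos.le
            calc A / Real.log 2 * ‖f 0‖ + A * m r 1
                = A * ((1/Real.log 2) * ‖f 0‖ + m r 1) := by ring
              _ ≤ A * (cstar * ‖f 0‖ + cstar * m r 1) := hmul'
              _ = A * (cstar * (‖f 0‖ + m r 1)) := by ring
    · -- case 1 < α
      rw [if_pos hα1] at hG
      have hc0v : c0 = 2^α/(α-1) := by rw [hc0def, if_pos hα1]
      have hval := step_bound hfA (s := α) hα1 hm1 hz1 (hb1 r h0 h1 z hz)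
      have hsplit : (1 - ‖z‖ ^ 2) ^ (α+(n:ℝ)-1)
          = (1 - ‖z‖ ^ 2) ^ ((n:ℝ)) * (1 - ‖z‖ ^ 2) ^ (α-1) := by
        rw [← Real.rpow_add hp]; ring_nf
      rw [hsplit]
      have hfz0 := norm_nonneg (f z)
      have hw0 : (0:ℝ) ≤ (1 - ‖z‖ ^ 2) ^ (α-1) := Real.rpow_nonneg hp.le _
      calc (1 - ‖z‖ ^ 2) ^ ((n:ℝ)) * (1 - ‖z‖ ^ 2) ^ (α-1) *
            (‖g ⟨0, hn⟩ z‖ * ‖f z‖)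
          = ((1 - ‖z‖ ^ 2) ^ ((n:ℝ)) * ‖g ⟨0, hn⟩ z‖) *
            ((1 - ‖z‖ ^ 2) ^ (α-1) * ‖f z‖) := by ring
        _ ≤ A * (‖f 0‖ + (2^α/(α-1)) * m r 1) := by
            apply mul_le_mul hG hval (mul_nonneg hw0 hfz0) hApos.le
        _ ≤ A * (cstar * (‖f 0‖ + m r 1)) := by
            apply hfin
            · exact div_nonneg (by positivity) (by linarith)
            · rw [← hc0v]; exact hc0le
  have htermk : ∀ r : ℝ, 0 ≤ r → r < 1 → ∀ z : ℂ, ‖z‖ ≤ r → ∀ k : Fin n,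
      1 ≤ (k:ℕ) →
      (1 - ‖z‖ ^ 2) ^ (α+(n:ℝ)-1) *
        (‖g k z‖ * ‖iteratedDeriv (k:ℕ) f z‖)
        ≤ A * m r (k:ℕ) := by
    intro r h0 h1 z hz k hk
    have hz1 : ‖z‖ < 1 := lt_of_le_of_lt hz h1
    have hzU : z ∈ UDisk := (hUmem z).2 hz1
    have hp := hpos12 z hz1
    have hgkz := hgk k hk z hzU
    have huk := hle r h0 h1 (k:ℕ) z hz
    simp only [hu] at huk
    have hsplit : (1 - ‖z‖ ^ 2) ^ (α+(n:ℝ)-1)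
        = (1 - ‖z‖ ^ 2) ^ ((n:ℝ)-((k:ℕ):ℝ)) *
          (1 - ‖z‖ ^ 2) ^ (α+((k:ℕ):ℝ)-1) := by
      rw [← Real.rpow_add hp]; ring_nf
    rw [hsplit]
    have w1 : (0:ℝ) ≤ (1 - ‖z‖ ^ 2) ^ (α+((k:ℕ):ℝ)-1) := Real.rpow_nonneg hp.le _
    calc (1 - ‖z‖ ^ 2) ^ ((n:ℝ)-((k:ℕ):ℝ)) *
          (1 - ‖z‖ ^ 2) ^ (α+((k:ℕ):ℝ)-1) *
          (‖g k z‖ * ‖iteratedDeriv (k:ℕ) f z‖)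
        = ((1 - ‖z‖ ^ 2) ^ ((n:ℝ)-((k:ℕ):ℝ)) * ‖g k z‖) *
          ((1 - ‖z‖ ^ 2) ^ (α+((k:ℕ):ℝ)-1) *
            ‖iteratedDeriv (k:ℕ) f z‖) := by ring
      _ ≤ A * m r (k:ℕ) := by
          apply mul_le_mul hgkz huk (mul_nonneg w1 (norm_nonneg _)) hApos.le
  -- the master estimate
  set Q : ℝ := cstar^n with hQdef
  have hQ0 : (0:ℝ) < Q := by rw [hQdef]; positivity
  have hf0 := norm_nonneg (f 0)
  obtain ⟨Y, hY⟩ : ∃ Y : ℝ, Y = A * ((n:ℝ) * cstar) * (‖f 0‖ + P) := ⟨_, rfl⟩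
  set Mfin : ℝ := 2*XF + 2*Y with hMdef
  have hMfin : ∀ r : ℝ, 0 ≤ r → r < 1 → m r n ≤ Mfin := by
    intro r h0 h1
    have hmn := hm0 r h0 h1 n
    set W : ℝ := cstar * (‖f 0‖ + P + Q * m r n) with hWdef
    have hX0 : (0:ℝ) ≤ ‖f 0‖ + P + Q * m r n := by
      have := mul_nonneg hQ0.le hmn
      linarith
    have hW0 : (0:ℝ) ≤ W := by
      rw [hWdef]; exact mul_nonneg hcs0.le hX0
    have hWge : ∀ k : ℕ, 1 ≤ k → k ≤ n → m r k ≤ W := by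
      intro k hk1 hkn
      have hc := hchain' r h0 h1 k hk1 hkn
      have hge : ‖f 0‖ + P + Q * m r n ≤ W := by
        rw [hWdef]
        exact le_mul_of_one_le_left hX0 hcs1
      linarith
    have hterm : ∀ z : ℂ, ‖z‖ ≤ r → ∀ k : Fin n,
        (1 - ‖z‖ ^ 2) ^ (α+(n:ℝ)-1) *
          ‖g k z * iteratedDeriv (k:ℕ) f z‖ ≤ A * W := by
      intro z hz k
      rw [norm_mul]
      rcases Nat.eq_zero_or_pos (k:ℕ) with hk0 | hk1
      · have hkeq : k = ⟨0, hn⟩ := Fin.ext hk0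
        subst hkeq
        have h1' := hterm0 r h0 h1 z hz
        have hm1' := hWge 1 le_rfl hn
        calc (1 - ‖z‖ ^ 2) ^ (α+(n:ℝ)-1) *
              (‖g ⟨0, hn⟩ z‖ * ‖iteratedDeriv ((⟨0, hn⟩ : Fin n):ℕ) f z‖)
            = (1 - ‖z‖ ^ 2) ^ (α+(n:ℝ)-1) *
              (‖g ⟨0, hn⟩ z‖ * ‖f z‖) := by
              norm_num [iteratedDeriv_zero]
          _ ≤ A * (cstar * (‖f 0‖ + m r 1)) := h1'
          _ ≤ A * W := by
              apply mul_le_mul_of_nonneg_left _ hApos.le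
              rw [hWdef]
              apply mul_le_mul_of_nonneg_left _ hcs0.le
              have hm1n := hchain' r h0 h1 1 le_rfl hn
              linarith
      · have h2' := htermk r h0 h1 z hz k hk1
        calc (1 - ‖z‖ ^ 2) ^ (α+(n:ℝ)-1) *
              (‖g k z‖ * ‖iteratedDeriv (k:ℕ) f z‖)
            ≤ A * m r (k:ℕ) := h2'
          _ ≤ A * W := by
              apply mul_le_mul_of_nonneg_left _ hApos.le
              exact hWge (k:ℕ) hk1 (le_of_lt k.isLt)
    have hun : ∀ z : ℂ, ‖z‖ ≤ r → u n z ≤ XF + (n:ℝ) * (A * W) := by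
      intro z hz
      have hz1 : ‖z‖ < 1 := lt_of_le_of_lt hz h1
      have hzU : z ∈ UDisk := (hUmem z).2 hz1
      have hp := hpos12 z hz1
      have hodez : iteratedDeriv n f z = F z - ∑ k : Fin n, g k z * iteratedDeriv (k:ℕ) f z :=
        eq_sub_of_add_eq (hode z hzU)
      have htri : ‖iteratedDeriv n f z‖ ≤
          ‖F z‖ + ∑ k : Fin n, ‖g k z * iteratedDeriv (k:ℕ) f z‖ := by
        rw [hodez]
        have t1 : ‖F z - ∑ k : Fin n, g k z * iteratedDeriv (k:ℕ) f z‖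
            ≤ ‖F z‖ + ‖∑ k : Fin n, g k z * iteratedDeriv (k:ℕ) f z‖ := by
          simpa [sub_eq_add_neg] using
            norm_add_le (F z) (-∑ k : Fin n, g k z * iteratedDeriv (k:ℕ) f z)
        have t2 : ‖∑ k : Fin n, g k z * iteratedDeriv (k:ℕ) f z‖
            ≤ ∑ k : Fin n, ‖g k z * iteratedDeriv (k:ℕ) f z‖ := by
          simpa using
            norm_sum_le Finset.univ (fun k : Fin n => g k z * iteratedDeriv (k:ℕ) f z)
        linarith
      have hw0 : (0:ℝ) ≤ (1 - ‖z‖ ^ 2) ^ (α+(n:ℝ)-1) := Real.rpow_nonneg hp.le _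
      have hsum : (1 - ‖z‖ ^ 2) ^ (α+(n:ℝ)-1) *
          (∑ k : Fin n, ‖g k z * iteratedDeriv (k:ℕ) f z‖) ≤ (n:ℝ) * (A * W) := by
        rw [Finset.mul_sum]
        calc (∑ k : Fin n, (1 - ‖z‖ ^ 2) ^ (α+(n:ℝ)-1) *
              ‖g k z * iteratedDeriv (k:ℕ) f z‖)
            ≤ ∑ _k : Fin n, A * W := Finset.sum_le_sum (fun k _ => hterm z hz k)
          _ = (n:ℝ) * (A * W) := by
              rw [Finset.sum_const, Finset.card_univ, Fintype.card_fin, nsmul_eq_mul]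
      calc u n z = (1 - ‖z‖ ^ 2) ^ (α+(n:ℝ)-1) *
            ‖iteratedDeriv n f z‖ := rfl
        _ ≤ (1 - ‖z‖ ^ 2) ^ (α+(n:ℝ)-1) *
            (‖F z‖ + ∑ k : Fin n, ‖g k z * iteratedDeriv (k:ℕ) f z‖) :=
            mul_le_mul_of_nonneg_left htri hw0
        _ = (1 - ‖z‖ ^ 2) ^ (α+(n:ℝ)-1) * ‖F z‖
            + (1 - ‖z‖ ^ 2) ^ (α+(n:ℝ)-1) *
              (∑ k : Fin n, ‖g k z * iteratedDeriv (k:ℕ) f z‖) := by ring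
        _ ≤ XF + (n:ℝ) * (A * W) := add_le_add (hFbound z hz1) hsum
    have hmrle : m r n ≤ XF + (n:ℝ) * (A * W) := hsup_le r h0 n _ hun
    -- unfold W and absorb
    have hnK : A * ((n:ℝ) * cstar * Q) ≤ 1/2 := by
      have h1' : (n:ℝ) * cstar * Q ≤ K := by
        rw [hQdef, hK, pow_succ]
        nlinarith [mul_nonneg (pow_nonneg hcs0.le n) hcs0.le]
      calc A * ((n:ℝ) * cstar * Q) ≤ A * K := mul_le_mul_of_nonneg_left h1' hApos.le
        _ = 1/2 := hAK
    have hexp : (n:ℝ) * (A * W) = Y + (A * ((n:ℝ) * cstar * Q)) * m r n := by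
      rw [hY, hWdef]; ring
    have habs : (A * ((n:ℝ) * cstar * Q)) * m r n ≤ (1/2) * m r n :=
      mul_le_mul_of_nonneg_right hnK hmn
    rw [hMdef]
    rw [hexp] at hmrle
    linarith
  -- conclusion
  refine ⟨hf, P + Q * Mfin, ?_⟩
  intro z hzU
  have hz1 : ‖z‖ < 1 := (hUmem z).1 hzU
  have hr0 : (0:ℝ) ≤ ‖z‖ := norm_nonneg z
  have h1 := hchain' (‖z‖) hr0 hz1 1 le_rfl hn
  have h2 := hle (‖z‖) hr0 hz1 1 z le_rfl
  have h3 := hMfin (‖z‖) hr0 hz1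
  have h4 : Q * m (‖z‖) n ≤ Q * Mfin := mul_le_mul_of_nonneg_left h3 hQ0.le
  have h5 : u 1 z = (1 - ‖z‖ ^ 2) ^ α * ‖deriv f z‖ := by
    simp only [hu]
    rw [iteratedDeriv_one]
    norm_num
  rw [h5] at h2
  linarith
end
end
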